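/- arXiv:1903.08754 — 11 statements merged into one kernel-verified Lean document; each statement's English description precedes it below -/
import Mathlib

section
/- For subsets C and D of a metric space X with centroid x_ctr, and ρ ≥ 0, the truncated Hausdorff distance dl_ρ(epi ι_C, epi ι_D) between the epigraphs of the indicator functions of C and D equals dl_ρ(C, D). -/
/-! The epigraph of `ι_C` is the cylinder `C × [0, ∞)`. For any point `(x, α)` with `α ≥ 0`,
its distance to `D × [0, ∞)` is realised horizontally and equals `dist(x, D)`; since every
truncation ball around `(c, 0)` meets the height `0`, the excesses of the cylinders are those
of their bases. -/

open Set Filter Metric ENNReal Pointwise Classical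

noncomputable section

/-- Excess of `A` over `B`: `sup_{x ∈ A} dist(x,B)`, valued in `ℝ≥0∞`
(so it is `0` when `A = ∅` and `∞` when `A ≠ ∅`, `B = ∅`). -/
def exs {X : Type*} [PseudoEMetricSpace X] (A B : Set X) : ℝ≥0∞ :=
  ⨆ x ∈ A, EMetric.infEdist x B

/-- Truncated Hausdorff distance with centroid `c` and radius `ρ`. -/
def dl {X : Type*} [PseudoEMetricSpace X] (c : X) (ρ : ℝ≥0∞) (A B : Set X) : ℝ≥0∞ :=
  max (exs (A ∩ EMetric.closedBall c ρ) B) (exs (B ∩ EMetric.closedBall c ρ) A)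

/-- Epigraph of an extended-real-valued function. -/
def epi {X : Type*} (f : X → EReal) : Set (X × ℝ) :=
  {p | f p.1 ≤ (p.2 : EReal)}

/-- Absolute difference of extended reals, valued in `ℝ≥0∞`. -/
def eAbsDiff (a b : EReal) : ℝ≥0∞ :=
  sInf {ε : ℝ≥0∞ | a ≤ b + (ε : EReal) ∧ b ≤ a + (ε : EReal)}

theorem epi_ite_zero_top {X : Type*} (C : Set X) :
    epi (fun x => if x ∈ C then (0 : EReal) else ⊤) = C ×ˢ Ici (0 : ℝ) := by
  ext ⟨x, α⟩
  by_cases hx : x ∈ C <;> simp [epi, hx, EReal.coe_nonneg]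

section Prod

variable {X Y : Type*} [PseudoEMetricSpace X] [PseudoEMetricSpace Y]

theorem infEDist_prod_of_mem {T : Set Y} {t : Y} (ht : t ∈ T) (x : X) (B : Set X) :
    infEDist (x, t) (B ×ˢ T) = infEDist x B := by
  rw [infEDist_prod, infEDist_zero_of_mem ht, max_zero]

theorem exs_prod_prod {A B : Set X} {S T : Set Y} (hST : S ⊆ T) (hS : S.Nonempty) :
    exs (A ×ˢ S) (B ×ˢ T) = exs A B := by
  calc exs (A ×ˢ S) (B ×ˢ T) = ⨆ x ∈ A, ⨆ t ∈ S, infEDist (x, t) (B ×ˢ T) := biSup_prod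
    _ = ⨆ x ∈ A, ⨆ _ ∈ S, infEDist x B :=
      biSup_congr fun x _ => biSup_congr fun t ht => infEDist_prod_of_mem (hST ht) x B
    _ = exs A B := by simp only [biSup_const hS]; rfl

theorem dl_prod_prod (c : X) (y : Y) (r : ℝ≥0∞) (A B : Set X) {T : Set Y} (hy : y ∈ T) :
    dl (c, y) r (A ×ˢ T) (B ×ˢ T) = dl c r A B := by
  have hT : (T ∩ closedEBall y r).Nonempty := ⟨y, hy, mem_closedEBall_self⟩
  -- `dl` is written with the alias `EMetric.closedBall`, which `rw` cannot see through.
  change max (exs (A ×ˢ T ∩ closedEBall (c, y) r) (B ×ˢ T))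
    (exs (B ×ˢ T ∩ closedEBall (c, y) r) (A ×ˢ T)) = dl c r A B
  rw [← closedEBall_prod_same, prod_inter_prod, prod_inter_prod,
    exs_prod_prod inter_subset_left hT, exs_prod_prod inter_subset_left hT]
  rfl

end Prod

theorem stmt0_general {X : Type*} [MetricSpace X] (c : X) (C D : Set X) (ρ : ℝ) :
    dl (c, (0 : ℝ)) (ENNReal.ofReal ρ)
      (epi (fun x => if x ∈ C then (0 : EReal) else ⊤))
      (epi (fun x => if x ∈ D then (0 : EReal) else ⊤))
    = dl c (ENNReal.ofReal ρ) C D := by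
  rw [epi_ite_zero_top, epi_ite_zero_top, dl_prod_prod c 0 _ C D self_mem_Ici]

/-- for the indicator functions of `C` and `D`, the truncated Hausdorff
distance between their epigraphs equals that between `C` and `D`. -/
theorem stmt0 {X : Type*} [MetricSpace X] (c : X) (C D : Set X) (ρ : ℝ) (hρ : 0 ≤ ρ) :
    dl (c, (0 : ℝ)) (ENNReal.ofReal ρ)
      (epi (fun x => if x ∈ C then (0 : EReal) else ⊤))
      (epi (fun x => if x ∈ D then (0 : EReal) else ⊤))
    = dl c (ENNReal.ofReal ρ) C D :=
  stmt0_general c C D ρ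
end
end

section
/- For i = 1,…,m, let C_i, D_i be subsets of metric spaces (X_i, d_{X_i}) with centroids x_i^ctr, and equip X = X_1 × ⋯ × X_m with the sup product metric and centroid (x_1^ctr,…,x_m^ctr). Then for all ρ ≥ 0, dl_ρ(C_1×⋯×C_m, D_1×⋯×D_m) ≤ max_{i} dl_ρ(C_i, D_i); moreover, if (C_1×⋯×C_m) ∩ B_X(ρ) and (D_1×⋯×D_m) ∩ B_X(ρ) are nonempty, then equality holds. -/
open Set Filter Metric ENNReal Pointwise Classical

noncomputable section

section Pi

variable {ι : Type*} [Fintype ι] {X : ι → Type*} [∀ i, PseudoEMetricSpace (X i)]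

theorem closedEBall_pi (c : ∀ i, X i) (r : ℝ≥0∞) :
    closedEBall c r = univ.pi fun i => closedEBall (c i) r := by
  ext x
  simp [edist_pi_le_iff]

/-- Complete distributivity of `ℝ≥0∞` exchanges the infimum over the product set with the
supremum over the coordinates. -/
theorem infEDist_pi (x : ∀ i, X i) (D : ∀ i, Set (X i)) :
    infEDist x (univ.pi D) = ⨆ i, infEDist (x i) (D i) := by
  simp_rw [infEDist, iInf_subtype', iSup_iInf_eq, edist_pi_def, Finset.sup_univ_eq_iSup]
  rw [← (Equiv.Set.univPi D).iInf_comp]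
  rfl

theorem exs_pi {A : ∀ i, Set (X i)} (hA : (univ.pi A).Nonempty) (D : ∀ i, Set (X i)) :
    exs (univ.pi A) (univ.pi D) = ⨆ i, exs (A i) (D i) := by
  -- `hA` makes every coordinate projection map `univ.pi A` onto `A i`
  simp_rw [exs, EMetric.infEdist, infEDist_pi, ← eval_image_univ_pi hA, iSup_image]
  exact (iSup_comm.trans (iSup_congr fun _ => iSup_comm)).symm

theorem exs_pi_le (A D : ∀ i, Set (X i)) :
    exs (univ.pi A) (univ.pi D) ≤ ⨆ i, exs (A i) (D i) := by
  rcases (univ.pi A).eq_empty_or_nonempty with hA | hA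
  · simp [exs, hA]
  · exact (exs_pi hA D).le

theorem pi_inter_closedEBall (C : ∀ i, Set (X i)) (c : ∀ i, X i) (r : ℝ≥0∞) :
    univ.pi C ∩ closedEBall c r = univ.pi fun i => C i ∩ closedEBall (c i) r := by
  rw [closedEBall_pi, ← pi_inter_distrib]

theorem dl_pi_le (c : ∀ i, X i) (r : ℝ≥0∞) (C D : ∀ i, Set (X i)) :
    dl c r (univ.pi C) (univ.pi D) ≤ ⨆ i, dl (c i) r (C i) (D i) := by
  simp_rw [dl, EMetric.closedBall, pi_inter_closedEBall, iSup_sup_eq]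
  exact max_le_max (exs_pi_le _ _) (exs_pi_le _ _)

theorem dl_pi (c : ∀ i, X i) (r : ℝ≥0∞) {C D : ∀ i, Set (X i)}
    (hC : (univ.pi C ∩ closedEBall c r).Nonempty)
    (hD : (univ.pi D ∩ closedEBall c r).Nonempty) :
    dl c r (univ.pi C) (univ.pi D) = ⨆ i, dl (c i) r (C i) (D i) := by
  rw [pi_inter_closedEBall] at hC hD
  simp_rw [dl, EMetric.closedBall, pi_inter_closedEBall, exs_pi hC, exs_pi hD, iSup_sup_eq]

end Pi

theorem stmt2_general {ι : Type*} [Fintype ι] {X : ι → Type*}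
    [∀ i, MetricSpace (X i)] (c : ∀ i, X i) (C D : ∀ i, Set (X i)) (ρ : ℝ) :
    dl c (ENNReal.ofReal ρ) (univ.pi C) (univ.pi D)
        ≤ ⨆ i, dl (c i) (ENNReal.ofReal ρ) (C i) (D i)
    ∧ ((univ.pi C ∩ EMetric.closedBall c (ENNReal.ofReal ρ)).Nonempty →
       (univ.pi D ∩ EMetric.closedBall c (ENNReal.ofReal ρ)).Nonempty →
       dl c (ENNReal.ofReal ρ) (univ.pi C) (univ.pi D)
         = ⨆ i, dl (c i) (ENNReal.ofReal ρ) (C i) (D i)) :=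
  ⟨dl_pi_le c _ C D, dl_pi c _⟩

/-- truncated Hausdorff distance between product sets with the sup product
metric: inequality in general, equality when both truncated products are nonempty. -/
theorem stmt2 {ι : Type*} [Fintype ι] [Nonempty ι] {X : ι → Type*}
    [∀ i, MetricSpace (X i)] (c : ∀ i, X i) (C D : ∀ i, Set (X i)) (ρ : ℝ) (hρ : 0 ≤ ρ) :
    dl c (ENNReal.ofReal ρ) (univ.pi C) (univ.pi D)
        ≤ ⨆ i, dl (c i) (ENNReal.ofReal ρ) (C i) (D i)
    ∧ ((univ.pi C ∩ EMetric.closedBall c (ENNReal.ofReal ρ)).Nonempty →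
       (univ.pi D ∩ EMetric.closedBall c (ENNReal.ofReal ρ)).Nonempty →
       dl c (ENNReal.ofReal ρ) (univ.pi C) (univ.pi D)
         = ⨆ i, dl (c i) (ENNReal.ofReal ρ) (C i) (D i)) :=
  stmt2_general c C D ρ
end
end

section
/- For subsets C and D of a normed linear space X and ρ ∈ [0,∞] such that C, D ⊂ B_X(ρ) (the closed ball of radius ρ centered at 0), the convex hulls satisfy dl_ρ(conv C, conv D) ≤ dl_ρ(C, D). -/
open Set Filter Metric ENNReal Pointwise Classical

noncomputable section

/-! The closed `δ`-thickening of a convex set is convex. Hence if every point of `C` lies within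
`δ` of `D`, the thickening of `conv D` contains `C` and therefore `conv C`. The truncation to the
ball is harmless: `C` and `D` already lie in it, and truncating `conv C` only shrinks it. -/

section Excess

variable {X : Type*}

lemma exs_mono_left [PseudoEMetricSpace X] {A A' B : Set X} (h : A' ⊆ A) :
    exs A' B ≤ exs A B :=
  biSup_mono fun _ hx => h hx

lemma exs_le_ofReal_iff_subset_cthickening [PseudoMetricSpace X] {A B : Set X} {δ : ℝ} :
    exs A B ≤ ENNReal.ofReal δ ↔ A ⊆ cthickening δ B :=
  iSup₂_le_iff

lemma exs_convexHull_le [SeminormedAddCommGroup X] [NormedSpace ℝ X] (C D : Set X) :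
    exs (convexHull ℝ C) (convexHull ℝ D) ≤ exs C D := by
  obtain htop | hfin := eq_or_ne (exs C D) ⊤
  · exact htop ▸ le_top
  rw [← ENNReal.ofReal_toReal hfin, exs_le_ofReal_iff_subset_cthickening]
  have hC : C ⊆ cthickening (exs C D).toReal (convexHull ℝ D) :=
    (exs_le_ofReal_iff_subset_cthickening.1 (ENNReal.ofReal_toReal hfin).ge).trans
      (cthickening_subset_of_subset _ (subset_convexHull ℝ D))
  exact convexHull_min hC ((convex_convexHull ℝ D).cthickening _)

end Excess

/-- taking convex hulls is nonexpansive for the truncated Hausdorff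
distance when both sets lie in the centered ball of radius `ρ` (possibly `ρ = ∞`). -/
theorem stmt3 {X : Type*} [NormedAddCommGroup X] [NormedSpace ℝ X]
    (C D : Set X) (ρ : ℝ≥0∞)
    (hC : C ⊆ EMetric.closedBall (0 : X) ρ) (hD : D ⊆ EMetric.closedBall (0 : X) ρ) :
    dl (0 : X) ρ (convexHull ℝ C) (convexHull ℝ D) ≤ dl (0 : X) ρ C D := by
  rw [dl, dl, inter_eq_self_of_subset_left hC, inter_eq_self_of_subset_left hD]
  exact max_le_max
    ((exs_mono_left inter_subset_left).trans (exs_convexHull_le C D))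
    ((exs_mono_left inter_subset_left).trans (exs_convexHull_le D C))
end
end

section
/- For a normed linear space X, nonempty sets C_1,…,C_m, D_1,…,D_m ⊂ X with C_i, D_i ⊂ B_X(ρ) for i = 2,…,m (but C_1, D_1 possibly unbounded), dl_ρ(C_1+⋯+C_m, D_1+⋯+D_m) ≤ dl_{mρ}(C_1,D_1) + Σ_{i=2}^m dl_ρ(C_i, D_i). -/
open Set Filter Metric ENNReal Pointwise Classical

noncomputable section

/-! Write a point `x` of `∑ Cᵢ` as `∑ cᵢ` with `cᵢ ∈ Cᵢ`. If `‖x‖ ≤ ρ` and `‖cᵢ‖ ≤ ρ` for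
`i ≠ 0`, the triangle inequality gives `‖c₀‖ ≤ mρ`, and `dist(x, ∑ Dᵢ) ≤ ∑ dist(cᵢ, Dᵢ)` since
the Minkowski sum of near points of the `Dᵢ` is a near point of `∑ Dᵢ`. -/

theorem infEDist_le_exs {X : Type*} [PseudoEMetricSpace X] {A : Set X} (B : Set X) {x : X}
    (hx : x ∈ A) : infEDist x B ≤ exs A B :=
  le_iSup₂ (f := fun y (_ : y ∈ A) => infEDist y B) x hx

section

variable {X : Type*} [SeminormedAddCommGroup X]

theorem infEDist_add_add_le (a b : X) (A B : Set X) :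
    infEDist (a + b) (A + B) ≤ infEDist a A + infEDist b B :=
  ENNReal.le_iInf₂_add_iInf₂ fun p hp q hq =>
    (infEDist_le_edist_of_mem (add_mem_add hp hq)).trans (edist_add_add_le a b p q)

theorem infEDist_finsetSum_le {ι : Type*} (s : Finset ι) (c : ι → X) (C : ι → Set X) :
    infEDist (∑ i ∈ s, c i) (∑ i ∈ s, C i) ≤ ∑ i ∈ s, infEDist (c i) (C i) := by
  induction s using Finset.induction_on with
  | empty => simp [infEDist_zero_of_mem]
  | insert j s hj ih =>
    simp only [Finset.sum_insert hj]
    exact (infEDist_add_add_le _ _ _ _).trans (add_le_add le_rfl ih)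

theorem mem_closedEBall_zero_ofReal_iff {r : ℝ} (hr : 0 ≤ r) {x : X} :
    x ∈ closedEBall (0 : X) (ENNReal.ofReal r) ↔ ‖x‖ ≤ r := by
  rw [closedEBall_ofReal hr, mem_closedBall, dist_zero_right]

theorem norm_le_norm_sum_add_sum_erase {ι : Type*} [DecidableEq ι] (s : Finset ι) (c : ι → X)
    {i : ι} (hi : i ∈ s) : ‖c i‖ ≤ ‖∑ j ∈ s, c j‖ + ∑ j ∈ s.erase i, ‖c j‖ :=
  calc ‖c i‖ = ‖∑ j ∈ s, c j - ∑ j ∈ s.erase i, c j‖ := by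
        rw [← Finset.add_sum_erase s c hi, add_sub_cancel_right]
    _ ≤ ‖∑ j ∈ s, c j‖ + ‖∑ j ∈ s.erase i, c j‖ := norm_sub_le _ _
    _ ≤ ‖∑ j ∈ s, c j‖ + ∑ j ∈ s.erase i, ‖c j‖ := by
        gcongr
        exact norm_sum_le _ _

theorem norm_le_card_mul_of_norm_sum_le {ι : Type*} [Fintype ι] [DecidableEq ι] {c : ι → X}
    {ρ : ℝ} (i₀ : ι) (hsum : ‖∑ i, c i‖ ≤ ρ) (hc : ∀ i ≠ i₀, ‖c i‖ ≤ ρ) :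
    ‖c i₀‖ ≤ Fintype.card ι * ρ :=
  calc ‖c i₀‖ ≤ ‖∑ i, c i‖ + ∑ i ∈ Finset.univ.erase i₀, ‖c i‖ :=
        norm_le_norm_sum_add_sum_erase _ c (Finset.mem_univ i₀)
    _ ≤ ρ + (Finset.univ.erase i₀).card • ρ := by
        gcongr
        exact Finset.sum_le_card_nsmul _ _ _ fun i hi => hc i (Finset.ne_of_mem_erase hi)
    _ = Fintype.card ι * ρ := by
        rw [Finset.card_erase_of_mem (Finset.mem_univ i₀), Finset.card_univ, nsmul_eq_mul,
          Nat.cast_sub (Fintype.card_pos_iff.2 ⟨i₀⟩)]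
        ring

theorem exs_finsetSum_inter_closedEBall_le {ι : Type*} [Fintype ι] [DecidableEq ι]
    (C D : ι → Set X) (i₀ : ι) {ρ : ℝ} (hρ : 0 ≤ ρ) (hC : ∀ i ≠ i₀, C i ⊆ closedBall 0 ρ) :
    exs ((∑ i, C i) ∩ closedEBall 0 (ENNReal.ofReal ρ)) (∑ i, D i)
      ≤ exs (C i₀ ∩ closedEBall 0 (ENNReal.ofReal (Fintype.card ι * ρ))) (D i₀)
        + ∑ i ∈ Finset.univ.erase i₀, exs (C i ∩ closedEBall 0 (ENNReal.ofReal ρ)) (D i) := by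
  refine iSup₂_le fun x ⟨hxC, hxρ⟩ => ?_
  obtain ⟨c, hcC, rfl⟩ := (Set.mem_finsetSum _ _ _).1 hxC
  rw [mem_closedEBall_zero_ofReal_iff hρ] at hxρ
  have hcρ : ∀ i ≠ i₀, ‖c i‖ ≤ ρ := fun i hi => by
    simpa using hC i hi (hcC (Finset.mem_univ i))
  calc infEDist (∑ i, c i) (∑ i, D i) ≤ ∑ i, infEDist (c i) (D i) :=
        infEDist_finsetSum_le _ _ _
    _ = infEDist (c i₀) (D i₀) + ∑ i ∈ Finset.univ.erase i₀, infEDist (c i) (D i) :=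
        (Finset.add_sum_erase _ _ (Finset.mem_univ _)).symm
    _ ≤ _ := by
        gcongr with i hi
        · refine infEDist_le_exs _ ⟨hcC (Finset.mem_univ _), ?_⟩
          rw [mem_closedEBall_zero_ofReal_iff (by positivity)]
          exact norm_le_card_mul_of_norm_sum_le i₀ hxρ hcρ
        · refine infEDist_le_exs _ ⟨hcC (Finset.mem_univ _), ?_⟩
          rw [mem_closedEBall_zero_ofReal_iff hρ]
          exact hcρ i (Finset.ne_of_mem_erase hi)

theorem dl_finsetSum_le {ι : Type*} [Fintype ι] [DecidableEq ι] (C D : ι → Set X) (i₀ : ι)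
    {ρ : ℝ} (hρ : 0 ≤ ρ) (hC : ∀ i ≠ i₀, C i ⊆ closedBall 0 ρ)
    (hD : ∀ i ≠ i₀, D i ⊆ closedBall 0 ρ) :
    dl 0 (ENNReal.ofReal ρ) (∑ i, C i) (∑ i, D i)
      ≤ dl 0 (ENNReal.ofReal (Fintype.card ι * ρ)) (C i₀) (D i₀)
        + ∑ i ∈ Finset.univ.erase i₀, dl 0 (ENNReal.ofReal ρ) (C i) (D i) :=
  max_le
    ((exs_finsetSum_inter_closedEBall_le C D i₀ hρ hC).trans
      (add_le_add (le_max_left _ _) (Finset.sum_le_sum fun _ _ => le_max_left _ _)))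
    ((exs_finsetSum_inter_closedEBall_le D C i₀ hρ hD).trans
      (add_le_add (le_max_right _ _) (Finset.sum_le_sum fun _ _ => le_max_right _ _)))

end

theorem stmt5_general {X : Type*} [NormedAddCommGroup X] {m : ℕ} [NeZero m]
    (C D : Fin m → Set X) (ρ : ℝ) (hρ : 0 ≤ ρ)
    (hC : ∀ i, i ≠ 0 → C i ⊆ Metric.closedBall (0 : X) ρ)
    (hD : ∀ i, i ≠ 0 → D i ⊆ Metric.closedBall (0 : X) ρ) :
    dl (0 : X) (ENNReal.ofReal ρ) (∑ i, C i) (∑ i, D i)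
      ≤ dl (0 : X) (ENNReal.ofReal (m * ρ)) (C 0) (D 0)
        + ∑ i ∈ Finset.univ.erase 0, dl (0 : X) (ENNReal.ofReal ρ) (C i) (D i) := by
  simpa using dl_finsetSum_le C D 0 hρ hC hD

/-- Minkowski sums where one summand (`C 0`, `D 0`) may be unbounded:
its contribution is measured at radius `m·ρ` instead of `ρ`. -/
theorem stmt5 {X : Type*} [NormedAddCommGroup X] {m : ℕ} [NeZero m]
    (C D : Fin m → Set X) (ρ : ℝ) (hρ : 0 ≤ ρ)
    (hCne : ∀ i, (C i).Nonempty) (hDne : ∀ i, (D i).Nonempty)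
    (hC : ∀ i, i ≠ 0 → C i ⊆ Metric.closedBall (0 : X) ρ)
    (hD : ∀ i, i ≠ 0 → D i ⊆ Metric.closedBall (0 : X) ρ) :
    dl (0 : X) (ENNReal.ofReal ρ) (∑ i, C i) (∑ i, D i)
      ≤ dl (0 : X) (ENNReal.ofReal (m * ρ)) (C 0) (D 0)
        + ∑ i ∈ Finset.univ.erase 0, dl (0 : X) (ENNReal.ofReal ρ) (C i) (D i) :=
  stmt5_general C D ρ hρ hC hD
end
end

section
/- For nonempty subsets C, D of a normed linear space, nonzero scalars λ, μ ∈ ℝ, and ρ ≥ 0, dl_ρ(λC, μD) ≤ ρ̄|λ−μ| + max{|λ|,|μ|} dl_{ρ̄}(C,D), provided ρ̄ > (2ρ + max{|λ| dist(0,C), |λ| dist(0,D), |μ| dist(0,D)}) · max{|λ|⁻¹, |μ|⁻¹}. -/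
open Set Filter Metric ENNReal Pointwise Classical

noncomputable section

/- A point `l • c` of the `r`-ball has `‖c‖ₑ ≤ R`; pass through `μ • c`, whose distance to
`μ • D` is `‖μ‖ₑ` times that of `c` to `D`. -/
theorem exs_smul_inter_closedEBall_le {𝕜 X : Type*} [NormedField 𝕜] [NormedAddCommGroup X]
    [NormedSpace 𝕜 X] {C D : Set X} {l μ : 𝕜} (hl : l ≠ 0) (hμ : μ ≠ 0) {r R : ℝ≥0∞}
    (hr : r ≤ ‖l‖ₑ * R) :
    exs (l • C ∩ closedEBall 0 r) (μ • D)
      ≤ ‖l - μ‖ₑ * R + ‖μ‖ₑ * exs (C ∩ closedEBall 0 R) D := by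
  refine iSup₂_le ?_
  rintro _ ⟨⟨c, hcC, rfl⟩, hball⟩
  have hcR : ‖c‖ₑ ≤ R := by
    rw [mem_closedEBall, edist_zero_right, enorm_smul] at hball
    exact (ENNReal.mul_le_mul_iff_right (enorm_ne_zero.mpr hl) enorm_ne_top).mp (hball.trans hr)
  calc infEDist (l • c) (μ • D) ≤ infEDist (μ • c) (μ • D) + edist (l • c) (μ • c) :=
        infEDist_le_infEDist_add_edist
    _ = ‖μ‖ₑ * infEDist c D + ‖l - μ‖ₑ * ‖c‖ₑ := by
        rw [infEDist_smul₀ hμ, edist_eq_enorm_sub, ← sub_smul, enorm_smul, ENNReal.smul_def,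
          smul_eq_mul, enorm_eq_nnnorm μ]
    _ ≤ ‖μ‖ₑ * exs (C ∩ closedEBall 0 R) D + ‖l - μ‖ₑ * R := by
        gcongr
        exact le_iSup₂ (f := fun x (_ : x ∈ C ∩ closedEBall 0 R) => infEDist x D) c
          ⟨hcC, mem_closedEBall.mpr (by rwa [edist_zero_right])⟩
    _ = ‖l - μ‖ₑ * R + ‖μ‖ₑ * exs (C ∩ closedEBall 0 R) D := add_comm _ _

theorem le_abs_mul_of_mul_le {a ρ ρb m : ℝ} (ha : a ≠ 0) (hρ : 0 ≤ ρ) (hm : |a|⁻¹ ≤ m)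
    (h : ρ * m ≤ ρb) : ρ ≤ |a| * ρb := by
  have ha' : 0 < |a| := abs_pos.mpr ha
  calc ρ = |a| * (ρ * |a|⁻¹) := by field_simp
    _ ≤ |a| * ρb := by gcongr; exact (mul_le_mul_of_nonneg_left hm hρ).trans h

theorem stmt6_general {X : Type*} [NormedAddCommGroup X] [NormedSpace ℝ X]
    (C D : Set X)
    (l μ : ℝ) (hl : l ≠ 0) (hμ : μ ≠ 0) (ρ ρb : ℝ) (hρ : 0 ≤ ρ)
    (hρb : ρb > (2 * ρ + max (|l| * Metric.infDist (0 : X) C)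
        (max (|l| * Metric.infDist (0 : X) D) (|μ| * Metric.infDist (0 : X) D)))
        * max |l|⁻¹ |μ|⁻¹) :
    dl (0 : X) (ENNReal.ofReal ρ) (l • C) (μ • D)
      ≤ ENNReal.ofReal (ρb * |l - μ|)
        + ENNReal.ofReal (max |l| |μ|) * dl (0 : X) (ENNReal.ofReal ρb) C D := by
  have hmax : ρ * max |l|⁻¹ |μ|⁻¹ ≤ ρb := by
    refine le_trans ?_ hρb.le
    gcongr
    exact le_add_of_le_of_nonneg (by linarith)
      (le_max_of_le_left (mul_nonneg (abs_nonneg l) infDist_nonneg))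
  have hρl := le_abs_mul_of_mul_le hl hρ (le_max_left _ _) hmax
  have hρμ := le_abs_mul_of_mul_le hμ hρ (le_max_right _ _) hmax
  have hradius (a : ℝ) (h : ρ ≤ |a| * ρb) : ENNReal.ofReal ρ ≤ ‖a‖ₑ * ENNReal.ofReal ρb := by
    rw [Real.enorm_eq_ofReal_abs, ← ENNReal.ofReal_mul (abs_nonneg a)]
    exact ENNReal.ofReal_le_ofReal h
  rw [mul_comm ρb, ENNReal.ofReal_mul (abs_nonneg _), ← Real.enorm_eq_ofReal_abs]
  refine max_le ?_ ?_
  · refine (exs_smul_inter_closedEBall_le hl hμ (hradius l hρl)).trans ?_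
    gcongr
    · rw [Real.enorm_eq_ofReal_abs]; exact ENNReal.ofReal_le_ofReal (le_max_right _ _)
    · exact le_max_left _ _
  · refine (exs_smul_inter_closedEBall_le hμ hl (hradius μ hρμ)).trans ?_
    rw [← enorm_neg, neg_sub]
    gcongr
    · rw [Real.enorm_eq_ofReal_abs]; exact ENNReal.ofReal_le_ofReal (le_max_left _ _)
    · exact le_max_right _ _

/-- scalar multiples of sets. -/
theorem stmt6 {X : Type*} [NormedAddCommGroup X] [NormedSpace ℝ X]
    (C D : Set X) (hCne : C.Nonempty) (hDne : D.Nonempty)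
    (l μ : ℝ) (hl : l ≠ 0) (hμ : μ ≠ 0) (ρ ρb : ℝ) (hρ : 0 ≤ ρ)
    (hρb : ρb > (2 * ρ + max (|l| * Metric.infDist (0 : X) C)
        (max (|l| * Metric.infDist (0 : X) D) (|μ| * Metric.infDist (0 : X) D)))
        * max |l|⁻¹ |μ|⁻¹) :
    dl (0 : X) (ENNReal.ofReal ρ) (l • C) (μ • D)
      ≤ ENNReal.ofReal (ρb * |l - μ|)
        + ENNReal.ofReal (max |l| |μ|) * dl (0 : X) (ENNReal.ofReal ρb) C D :=
  stmt6_general C D l μ hl hμ ρ ρb hρ hρb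
end
end

section
/- For a metric space X, functions f, g : X → [−∞,∞], and ε, ρ ≥ 0: if inf f, inf g ∈ [−ρ, ρ−ε), γ-argmin f ∩ B_X(ρ) and γ-argmin g ∩ B_X(ρ) are nonempty for all γ > 0, and δ > ε + 2·dl_ρ(epi f, epi g), then exs(ε-argmin g ∩ B_X(ρ); δ-argmin f) ≤ dl_ρ(epi f, epi g). -/
open Set Filter Metric ENNReal Pointwise Classical

noncomputable section

/-!
Write `D` for the truncated distance between the epigraphs. A near-minimizer `z` of `f` in the
ball lifts to the point `(z, f z)` of `epi f` in the ball of the product space, which lies within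
`D + η` of some point of `epi g`; hence `inf g ≤ inf f + D`. Now lift a point `x` of the
`ε`-argmin of `g` in the ball to `(x, g x)`: it lies within `D + η` of some `(y, β) ∈ epi f`, so
`f y ≤ g x + D + η ≤ inf g + ε + D + η ≤ inf f + ε + 2 D + η`, which for small `η` puts `y` in the
`δ`-argmin of `f` at distance less than `D + η` from `x`.
-/

lemma dl_comm {X : Type*} [PseudoEMetricSpace X] (c : X) (ρ : ℝ≥0∞) (A B : Set X) :
    dl c ρ A B = dl c ρ B A :=
  max_comm _ _

lemma infEDist_le_dl {X : Type*} [PseudoEMetricSpace X] {c p : X} {ρ : ℝ≥0∞} {A B : Set X}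
    (hpA : p ∈ A) (hp : edist p c ≤ ρ) : Metric.infEDist p B ≤ dl c ρ A B :=
  le_max_of_le_left <|
    le_iSup₂ (f := fun q (_ : q ∈ A ∩ Metric.closedEBall c ρ) => Metric.infEDist q B) p ⟨hpA, hp⟩

lemma EReal.exists_coe_eq_abs_le {e : EReal} {ρ : ℝ} (h₁ : ((-ρ : ℝ) : EReal) ≤ e)
    (h₂ : e ≤ ρ) : ∃ a : ℝ, e = a ∧ |a| ≤ ρ := by
  induction e using EReal.rec with
  | bot => exact absurd (le_bot_iff.mp h₁) (EReal.coe_ne_bot _)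
  | top => exact absurd (top_le_iff.mp h₂) (EReal.coe_ne_top _)
  | coe a => exact ⟨a, rfl, abs_le.mpr ⟨EReal.coe_le_coe_iff.mp h₁, EReal.coe_le_coe_iff.mp h₂⟩⟩

lemma ENNReal.exists_eq_ofReal_of_ofReal_add_two_mul_lt {D : ℝ≥0∞} {ε δ : ℝ} (hε : 0 ≤ ε)
    (h : ENNReal.ofReal ε + 2 * D < ENNReal.ofReal δ) :
    ∃ t, 0 ≤ t ∧ D = ENNReal.ofReal t ∧ ε + 2 * t < δ := by
  have hD : D ≠ ⊤ := by
    rintro rfl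
    simp at h
  refine ⟨D.toReal, toReal_nonneg, (ofReal_toReal hD).symm, ?_⟩
  rw [← ofReal_lt_ofReal_iff_of_nonneg (by positivity), ofReal_add hε (by positivity),
    ofReal_mul zero_le_two, ofReal_toReal hD]
  simpa using h

section Epigraphs

variable {X : Type*} [PseudoMetricSpace X] {c : X} {f g : X → EReal} {ρ : ℝ}

lemma exists_dist_lt_le_add_of_dl_epi_lt {x : X} {a r : ℝ} (hfx : f x ≤ a) (hx : dist x c ≤ ρ)
    (ha : |a| ≤ ρ) (hD : dl (c, (0 : ℝ)) (ENNReal.ofReal ρ) (epi f) (epi g) < ENNReal.ofReal r) :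
    ∃ y, dist x y < r ∧ g y ≤ ((a + r : ℝ) : EReal) := by
  have hball : edist (x, a) (c, (0 : ℝ)) ≤ ENNReal.ofReal ρ := by
    rw [edist_dist, Prod.dist_eq, Real.dist_eq, sub_zero]
    exact ofReal_le_ofReal (max_le hx ha)
  obtain ⟨⟨y, b⟩, hyb, hdist⟩ :=
    Metric.infEDist_lt_iff.mp ((infEDist_le_dl (B := epi g) hfx hball).trans_lt hD)
  rw [edist_lt_ofReal, Prod.dist_eq, max_lt_iff, Real.dist_eq, abs_sub_lt_iff] at hdist
  exact ⟨y, hdist.1, hyb.trans (EReal.coe_le_coe_iff.mpr (by linarith [hdist.2.2]))⟩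

lemma iInf_le_iInf_add_of_dl_epi_eq {F G t : ℝ} (hF : ⨅ x, f x = F) (hG : ⨅ x, g x = G)
    (hFρ : -ρ ≤ F) (hFρ' : F < ρ)
    (hmin : ∀ γ > 0, ∃ z, dist z c ≤ ρ ∧ f z ≤ ((F + γ : ℝ) : EReal))
    (ht : 0 ≤ t) (hD : dl (c, (0 : ℝ)) (ENNReal.ofReal ρ) (epi f) (epi g) = ENNReal.ofReal t) :
    G ≤ F + t := by
  refine le_of_forall_pos_le_add fun η hη => ?_
  obtain ⟨z, hzc, hz⟩ := hmin (min (η / 2) (ρ - F)) (lt_min (by linarith) (by linarith))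
  have hz_low : ((-ρ : ℝ) : EReal) ≤ f z := (EReal.coe_le_coe_iff.mpr hFρ).trans (hF ▸ iInf_le f z)
  obtain ⟨b, hb, hbρ⟩ := EReal.exists_coe_eq_abs_le hz_low
    (hz.trans (EReal.coe_le_coe_iff.mpr (by linarith [min_le_right (η / 2) (ρ - F)])))
  have hbF : b ≤ F + η / 2 := by
    have := EReal.coe_le_coe_iff.mp (hb ▸ hz)
    linarith [min_le_left (η / 2) (ρ - F)]
  obtain ⟨y, -, hy⟩ := exists_dist_lt_le_add_of_dl_epi_lt (r := t + η / 2) hb.le hzc hbρ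
    (by rw [hD]; exact (ofReal_lt_ofReal_iff_of_nonneg ht).mpr (by linarith))
  have hGy : G ≤ b + (t + η / 2) := EReal.coe_le_coe_iff.mp (hG ▸ (iInf_le g y).trans hy)
  linarith

lemma infEDist_argmin_le_of_dl_epi_eq {F G t ε δ : ℝ} {x : X} (hF : ⨅ x, f x = F)
    (hG : ⨅ x, g x = G) (hGρ : -ρ ≤ G) (hGρ' : G + ε ≤ ρ) (hGF : G ≤ F + t) (ht : 0 ≤ t)
    (hεδ : ε + 2 * t < δ)
    (hD : dl (c, (0 : ℝ)) (ENNReal.ofReal ρ) (epi f) (epi g) = ENNReal.ofReal t)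
    (hx : g x ≤ ((G + ε : ℝ) : EReal)) (hxc : dist x c ≤ ρ) :
    Metric.infEDist x {y | f y < ⊤ ∧ f y ≤ (⨅ x', f x') + ((δ : ℝ) : EReal)}
      ≤ ENNReal.ofReal t := by
  have hx_low : ((-ρ : ℝ) : EReal) ≤ g x := (EReal.coe_le_coe_iff.mpr hGρ).trans (hG ▸ iInf_le g x)
  obtain ⟨a, ha, haρ⟩ :=
    EReal.exists_coe_eq_abs_le hx_low (hx.trans (EReal.coe_le_coe_iff.mpr hGρ'))
  have haG : a ≤ G + ε := EReal.coe_le_coe_iff.mp (ha ▸ hx)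
  refine ENNReal.le_of_forall_pos_le_add fun η hη _ => ?_
  set r := min (η : ℝ) (δ - ε - 2 * t)
  have hr : 0 < r := lt_min hη (by linarith)
  obtain ⟨y, hxy, hy⟩ := exists_dist_lt_le_add_of_dl_epi_lt (r := t + r) ha.le hxc haρ
    (by rw [dl_comm, hD]; exact (ofReal_lt_ofReal_iff_of_nonneg ht).mpr (by linarith))
  have hy_argmin : y ∈ {y | f y < ⊤ ∧ f y ≤ (⨅ x', f x') + ((δ : ℝ) : EReal)} := by
    refine ⟨hy.trans_lt (EReal.coe_lt_top _), hy.trans ?_⟩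
    rw [hF, ← EReal.coe_add, EReal.coe_le_coe_iff]
    linarith [min_le_right (η : ℝ) (δ - ε - 2 * t)]
  calc Metric.infEDist x _ ≤ edist x y := Metric.infEDist_le_edist_of_mem hy_argmin
    _ ≤ ENNReal.ofReal (t + η) := by
        rw [edist_dist]
        exact ofReal_le_ofReal (by linarith [min_le_left (η : ℝ) (δ - ε - 2 * t)])
    _ = ENNReal.ofReal t + η := by rw [ofReal_add ht η.coe_nonneg, ofReal_coe_nnreal]

end Epigraphs

theorem stmt9_general {X : Type*} [MetricSpace X] (c : X) (f g : X → EReal) (ε ρ δ : ℝ)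
    (hε : 0 ≤ ε)
    (hf1 : ((-ρ : ℝ) : EReal) ≤ ⨅ x, f x) (hf2 : ⨅ x, f x < ((ρ - ε : ℝ) : EReal))
    (hg1 : ((-ρ : ℝ) : EReal) ≤ ⨅ x, g x) (hg2 : ⨅ x, g x < ((ρ - ε : ℝ) : EReal))
    (hfargmin : ∀ γ : ℝ, 0 < γ →
      ({x | f x < ⊤ ∧ f x ≤ (⨅ x', f x') + ((γ : ℝ) : EReal)}
        ∩ Metric.closedBall c ρ).Nonempty)
    (hδ : ENNReal.ofReal δ >
      ENNReal.ofReal ε + 2 * dl (c, (0 : ℝ)) (ENNReal.ofReal ρ) (epi f) (epi g)) :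
    exs ({x | g x < ⊤ ∧ g x ≤ (⨅ x', g x') + ((ε : ℝ) : EReal)} ∩ Metric.closedBall c ρ)
        {x | f x < ⊤ ∧ f x ≤ (⨅ x', f x') + ((δ : ℝ) : EReal)}
      ≤ dl (c, (0 : ℝ)) (ENNReal.ofReal ρ) (epi f) (epi g) := by
  obtain ⟨t, ht, hD, hεδ⟩ := ENNReal.exists_eq_ofReal_of_ofReal_add_two_mul_lt hε hδ
  have hρε : ((ρ - ε : ℝ) : EReal) ≤ ρ := EReal.coe_le_coe_iff.mpr (by linarith)
  obtain ⟨F, hF, -⟩ := EReal.exists_coe_eq_abs_le hf1 (hf2.le.trans hρε)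
  obtain ⟨G, hG, -⟩ := EReal.exists_coe_eq_abs_le hg1 (hg2.le.trans hρε)
  have hFρ : F < ρ - ε := EReal.coe_lt_coe_iff.mp (hF ▸ hf2)
  have hGρ : G < ρ - ε := EReal.coe_lt_coe_iff.mp (hG ▸ hg2)
  have hGF : G ≤ F + t := by
    refine iInf_le_iInf_add_of_dl_epi_eq hF hG (EReal.coe_le_coe_iff.mp (hF ▸ hf1))
      (by linarith) (fun γ hγ => ?_) ht hD
    obtain ⟨z, ⟨-, hz⟩, hzc⟩ := hfargmin γ hγ
    exact ⟨z, hzc, by rwa [EReal.coe_add, ← hF]⟩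
  rw [hD]
  refine iSup₂_le fun x ⟨⟨_, hx⟩, hxc⟩ => infEDist_argmin_le_of_dl_epi_eq hF hG
    (EReal.coe_le_coe_iff.mp (hG ▸ hg1)) (by linarith) hGF ht hεδ hD
    (by rwa [EReal.coe_add, ← hG]) hxc

/-- approximation of near-minimizers. -/
theorem stmt9 {X : Type*} [MetricSpace X] (c : X) (f g : X → EReal) (ε ρ δ : ℝ)
    (hε : 0 ≤ ε) (hρ : 0 ≤ ρ)
    (hf1 : ((-ρ : ℝ) : EReal) ≤ ⨅ x, f x) (hf2 : ⨅ x, f x < ((ρ - ε : ℝ) : EReal))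
    (hg1 : ((-ρ : ℝ) : EReal) ≤ ⨅ x, g x) (hg2 : ⨅ x, g x < ((ρ - ε : ℝ) : EReal))
    (hfargmin : ∀ γ : ℝ, 0 < γ →
      ({x | f x < ⊤ ∧ f x ≤ (⨅ x', f x') + ((γ : ℝ) : EReal)}
        ∩ Metric.closedBall c ρ).Nonempty)
    (hgargmin : ∀ γ : ℝ, 0 < γ →
      ({x | g x < ⊤ ∧ g x ≤ (⨅ x', g x') + ((γ : ℝ) : EReal)}
        ∩ Metric.closedBall c ρ).Nonempty)
    (hδ : ENNReal.ofReal δ >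
      ENNReal.ofReal ε + 2 * dl (c, (0 : ℝ)) (ENNReal.ofReal ρ) (epi f) (epi g)) :
    exs ({x | g x < ⊤ ∧ g x ≤ (⨅ x', g x') + ((ε : ℝ) : EReal)} ∩ Metric.closedBall c ρ)
        {x | f x < ⊤ ∧ f x ≤ (⨅ x', f x') + ((δ : ℝ) : EReal)}
      ≤ dl (c, (0 : ℝ)) (ENNReal.ofReal ρ) (epi f) (epi g) :=
  stmt9_general c f g ε ρ δ hε hf1 hf2 hg1 hg2 hfargmin hδ
end
end

section
/- For a metric space X, functions f, g : X → [−∞,∞] with nonempty epigraphs, and ρ ≥ 0, the truncated Hausdorff distance dl_ρ(epi f, epi g) equals the infimum over all η ≥ 0 satisfying the Kenmochi conditions: inf_{B(x,η)} g ≤ max{f(x), −ρ} + η for all x ∈ lev_ρ f ∩ B_X(ρ), and inf_{B(x,η)} f ≤ max{g(x), −ρ} + η for all x ∈ lev_ρ g ∩ B_X(ρ). -/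
open Set Filter Metric ENNReal Pointwise Classical

noncomputable section

/-!
The point `(x, α)` lies within `η` of `epi g` essentially when `g` drops below `α + η` somewhere
in the `η`-ball around `x`. The points of `epi f` in the truncation ball are the `(x, α)` with
`x ∈ B_X(ρ)`, `f x ≤ α` and `|α| ≤ ρ`; among those above a given `x` the lowest one,
`α = max (f x) (-ρ)`, is the hardest to approximate. Hence the Kenmochi condition at `η` bounds the
excess of `epi f` over `epi g` by `η`, and an excess `< η` gives the condition at `η`.
-/

def KenmochiCondition {X : Type*} [PseudoMetricSpace X] (c : X) (ρ : ℝ) (f g : X → EReal)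
    (η : ℝ≥0∞) : Prop :=
  ∀ x, f x ≤ (ρ : EReal) → x ∈ closedBall c ρ →
    ⨅ y ∈ closedEBall x η, g y ≤ max (f x) ((-ρ : ℝ) : EReal) + (η : EReal)

theorem mem_closedEBall_zero_prod_iff {X : Type*} [PseudoMetricSpace X] {c x : X} {α ρ : ℝ}
    (hρ : 0 ≤ ρ) :
    (x, α) ∈ closedEBall (c, (0 : ℝ)) (.ofReal ρ) ↔ x ∈ closedBall c ρ ∧ α ∈ Icc (-ρ) ρ := by
  rw [closedEBall_ofReal hρ, ← closedBall_prod_same, mem_prod, Real.closedBall_eq_Icc,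
    zero_sub, zero_add]

section Epigraph

variable {X : Type*} [PseudoEMetricSpace X] {g : X → EReal} {x : X} {α : ℝ} {η : ℝ≥0∞}

theorem infEDist_epi_le_of_iInf_le (h : ⨅ y ∈ closedEBall x η, g y ≤ (α : EReal) + η) :
    infEDist (x, α) (epi g) ≤ η := by
  refine ENNReal.le_of_forall_pos_le_add fun ε hε hη => ?_
  set t := η.toReal
  have hηt : (η : EReal) = (t : EReal) := (EReal.coe_ennreal_toReal hη.ne).symm
  obtain ⟨y, hy, hgy⟩ : ∃ y ∈ closedEBall x η, g y < ((α + t + ε : ℝ) : EReal) := by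
    have hlt : ⨅ y ∈ closedEBall x η, g y < ((α + t + ε : ℝ) : EReal) := by
      refine h.trans_lt ?_
      rw [hηt, ← EReal.coe_add, EReal.coe_lt_coe_iff]
      linarith [show (0 : ℝ) < ε from hε]
    simpa only [iInf_lt_iff, exists_prop] using hlt
  calc infEDist (x, α) (epi g) ≤ edist (x, α) (y, α + t + ε) := infEDist_le_edist_of_mem hgy.le
    _ ≤ η + ε := by
      rw [Prod.edist_eq]
      refine max_le ((mem_closedEBall'.1 hy).trans le_self_add) ?_
      rw [edist_dist, Real.dist_eq, show α - (α + t + ε) = -(t + ε) by ring, abs_neg,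
        abs_of_nonneg (by positivity), ENNReal.ofReal_add (by positivity) ε.coe_nonneg,
        ENNReal.ofReal_toReal hη.ne, ENNReal.ofReal_coe_nnreal]

theorem iInf_le_of_infEDist_epi_lt (h : infEDist (x, α) (epi g) < η) :
    ⨅ y ∈ closedEBall x η, g y ≤ (α : EReal) + η := by
  obtain ⟨⟨y, β⟩, hgy, hd⟩ := infEDist_lt_iff.1 h
  rw [Prod.edist_eq, max_lt_iff] at hd
  calc ⨅ y ∈ closedEBall x η, g y ≤ g y := iInf₂_le y (mem_closedEBall'.2 hd.1.le)
    _ ≤ β := hgy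
    _ ≤ ((α + dist α β : ℝ) : EReal) :=
      EReal.coe_le_coe_iff.2 (by linarith [le_abs_self (β - α), Real.dist_eq β α, dist_comm α β])
    _ = α + (edist α β : EReal) := by
      rw [edist_dist, EReal.coe_ennreal_ofReal, max_eq_left dist_nonneg, EReal.coe_add]
    _ ≤ α + η := add_le_add_right (EReal.coe_ennreal_le_coe_ennreal_iff.2 hd.2.le) _

end Epigraph

section Kenmochi

variable {X : Type*} [PseudoMetricSpace X] {c : X} {ρ : ℝ} {f g : X → EReal} {η : ℝ≥0∞}

theorem exs_epi_le_of_kenmochiCondition (hρ : 0 ≤ ρ) (h : KenmochiCondition c ρ f g η) :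
    exs (epi f ∩ closedEBall (c, (0 : ℝ)) (.ofReal ρ)) (epi g) ≤ η := by
  refine iSup₂_le fun ⟨x, α⟩ ⟨(hfx : f x ≤ α), hxα⟩ => ?_
  obtain ⟨hx, hα⟩ := (mem_closedEBall_zero_prod_iff hρ).1 hxα
  refine infEDist_epi_le_of_iInf_le ((h x (hfx.trans ?_) hx).trans ?_)
  · exact EReal.coe_le_coe_iff.2 hα.2
  · exact add_le_add_left (max_le hfx (EReal.coe_le_coe_iff.2 hα.1)) _

theorem kenmochiCondition_of_exs_epi_lt (hρ : 0 ≤ ρ)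
    (h : exs (epi f ∩ closedEBall (c, (0 : ℝ)) (.ofReal ρ)) (epi g) < η) :
    KenmochiCondition c ρ f g η := by
  intro x hfx hx
  have hm_lo : ((-ρ : ℝ) : EReal) ≤ max (f x) ((-ρ : ℝ) : EReal) := le_max_right _ _
  have hm_hi : max (f x) ((-ρ : ℝ) : EReal) ≤ ρ :=
    max_le hfx (EReal.coe_le_coe_iff.2 (by linarith))
  obtain ⟨a, ha⟩ : ∃ a : ℝ, (a : EReal) = max (f x) ((-ρ : ℝ) : EReal) :=
    ⟨_, EReal.coe_toReal (ne_top_of_le_ne_top (EReal.coe_ne_top ρ) hm_hi)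
      (ne_bot_of_le_ne_bot (EReal.coe_ne_bot _) hm_lo)⟩
  rw [← ha] at hm_lo hm_hi ⊢
  have hxa : (x, a) ∈ epi f ∩ closedEBall (c, (0 : ℝ)) (.ofReal ρ) :=
    ⟨(ha ▸ le_max_left _ _ : f x ≤ a), (mem_closedEBall_zero_prod_iff hρ).2
      ⟨hx, EReal.coe_le_coe_iff.1 hm_lo, EReal.coe_le_coe_iff.1 hm_hi⟩⟩
  exact iInf_le_of_infEDist_epi_lt
    ((le_iSup₂ (f := fun p _ => infEDist p (epi g)) _ hxa).trans_lt h)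

end Kenmochi

theorem stmt11_general {X : Type*} [MetricSpace X] (c : X) (f g : X → EReal)
    (ρ : ℝ) (hρ : 0 ≤ ρ) :
    dl (c, (0 : ℝ)) (ENNReal.ofReal ρ) (epi f) (epi g) =
      sInf {η : ℝ≥0∞ |
        (∀ x, f x ≤ ((ρ : ℝ) : EReal) → x ∈ Metric.closedBall c ρ →
          ⨅ y ∈ EMetric.closedBall x η, g y ≤ max (f x) ((-ρ : ℝ) : EReal) + (η : EReal)) ∧
        (∀ x, g x ≤ ((ρ : ℝ) : EReal) → x ∈ Metric.closedBall c ρ →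
          ⨅ y ∈ EMetric.closedBall x η, f y ≤ max (g x) ((-ρ : ℝ) : EReal) + (η : EReal))} := by
  refine le_antisymm (le_sInf fun η ⟨hfg, hgf⟩ => max_le
    (exs_epi_le_of_kenmochiCondition hρ hfg) (exs_epi_le_of_kenmochiCondition hρ hgf)) ?_
  refine le_of_forall_gt_imp_ge_of_dense fun η hη => sInf_le ⟨?_, ?_⟩
  · exact kenmochiCondition_of_exs_epi_lt hρ ((le_max_left _ _).trans_lt hη)
  · exact kenmochiCondition_of_exs_epi_lt hρ ((le_max_right _ _).trans_lt hη)

/-- Kenmochi conditions. -/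
theorem stmt11 {X : Type*} [MetricSpace X] (c : X) (f g : X → EReal)
    (hf : (epi f).Nonempty) (hg : (epi g).Nonempty) (ρ : ℝ) (hρ : 0 ≤ ρ) :
    dl (c, (0 : ℝ)) (ENNReal.ofReal ρ) (epi f) (epi g) =
      sInf {η : ℝ≥0∞ |
        (∀ x, f x ≤ ((ρ : ℝ) : EReal) → x ∈ Metric.closedBall c ρ →
          ⨅ y ∈ EMetric.closedBall x η, g y ≤ max (f x) ((-ρ : ℝ) : EReal) + (η : EReal)) ∧
        (∀ x, g x ≤ ((ρ : ℝ) : EReal) → x ∈ Metric.closedBall c ρ →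
          ⨅ y ∈ EMetric.closedBall x η, f y ≤ max (g x) ((-ρ : ℝ) : EReal) + (η : EReal))} :=
  stmt11_general c f g ρ hρ
end
end

section
/- Let X be a metric space, f, g : X → [−∞,∞] with nonempty epigraphs, both α-Hölder continuous with common modulus κ : ℝ₊ → ℝ₊ and exponent α ∈ (0,∞) on centered balls, and let C ⊂ X be nonempty, ρ ≥ 0, A_ρ = (lev_ρ f ∪ lev_ρ g) ∩ B_X(ρ), and ρ̂ > ρ + exs(A_ρ; C). Then dl_ρ(epi f, epi g) ≤ max{exs(A_ρ; C), κ(ρ̂)·[exs(A_ρ; C)]^α + sup_C |f − g|}. -/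
open Set Filter Metric ENNReal Pointwise Classical

noncomputable section

/-!
Take `(x, t) ∈ epi f` in the ball of radius `ρ`. Then `f x ≤ t ≤ ρ`, so `x ∈ A_ρ` and there are points
`y ∈ C` with `d(x, y)` arbitrarily close to `e := exs(A_ρ; C)`. Both `x` and `y` lie in `B_X(ρ̂)`, so
Hölder continuity of `f` and the bound on `|f − g|` over `C` give
`g y ≤ f x + κ(ρ̂) d(x,y)^α + sup_C |f − g| ≤ t + κ(ρ̂) d(x,y)^α + sup_C |f − g|`,
and lifting `(x, t)` to the corresponding point of `epi g` over `y` proves the bound in the limit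
`d(x, y) ↓ e`. The other excess is symmetric.
-/

open Topology

lemma eAbsDiff_comm (a b : EReal) : eAbsDiff a b = eAbsDiff b a := by
  unfold eAbsDiff; congr 1; ext ε; exact and_comm

lemma le_add_of_eAbsDiff_lt {a b : EReal} {m : ℝ≥0∞} (h : eAbsDiff a b < m) :
    b ≤ a + (m : EReal) := by
  obtain ⟨ε, hε, hεm⟩ := sInf_lt_iff.mp h
  exact hε.2.trans (add_le_add_right (EReal.coe_ennreal_le_coe_ennreal_iff.mpr hεm.le) a)

lemma le_add_of_eAbsDiff_le {a b : EReal} {m : ℝ≥0∞} (h : eAbsDiff a b ≤ m) (hm : m ≠ ⊤) :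
    b ≤ a + (m : EReal) := by
  induction a using EReal.rec with
  | bot =>
    have := le_add_of_eAbsDiff_lt (h.trans_lt (lt_add_right hm one_ne_zero))
    simp_all
  | top => simp
  | coe r =>
    refine EReal.le_of_forall_lt_iff_le.mp fun z hz ↦ ?_
    have hmz : m < ENNReal.ofReal (z - r) := by
      rw [← EReal.coe_ennreal_toReal hm, ← EReal.coe_add, EReal.coe_lt_coe_iff] at hz
      exact (ENNReal.lt_ofReal_iff_toReal_lt hm).mpr (by linarith)
    calc b ≤ r + (ENNReal.ofReal (z - r) : EReal) := le_add_of_eAbsDiff_lt (h.trans_lt hmz)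
      _ = z := by
        rw [EReal.coe_ennreal_ofReal, max_eq_left (ENNReal.ofReal_pos.mp (hmz.trans_le' bot_le)).le,
          ← EReal.coe_add, add_sub_cancel]

section Epigraph

variable {X : Type*} [PseudoEMetricSpace X]

lemma infEDist_epi_le_of_le_add {g : X → EReal} {x y : X} {t : ℝ} {M : ℝ≥0∞}
    (h : g y ≤ (t : EReal) + (M : EReal)) :
    infEDist (x, t) (epi g) ≤ max (edist x y) M := by
  rcases eq_or_ne M ⊤ with rfl | hM
  · simp
  have hmem : (y, t + M.toReal) ∈ epi g := by
    simpa [epi, EReal.coe_add, EReal.coe_ennreal_toReal hM] using h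
  calc infEDist (x, t) (epi g) ≤ edist (x, t) (y, t + M.toReal) := infEDist_le_edist_of_mem hmem
    _ = max (edist x y) M := by
      rw [Prod.edist_eq, edist_dist t, Real.dist_eq, sub_add_cancel_left, abs_neg,
        abs_of_nonneg toReal_nonneg, ofReal_toReal hM]

lemma infEDist_epi_le_of_eAbsDiff_le {f g : X → EReal} {x y : X} {t : ℝ} {H S : ℝ≥0∞}
    (hxt : f x ≤ t) (hH : eAbsDiff (f x) (f y) ≤ H) (hS : eAbsDiff (f y) (g y) ≤ S) :
    infEDist (x, t) (epi g) ≤ max (edist x y) (H + S) := by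
  rcases eq_or_ne (H + S) ⊤ with hHS | hHS
  · simp [hHS]
  obtain ⟨hH', hS'⟩ := add_ne_top.mp hHS
  refine infEDist_epi_le_of_le_add ?_
  calc g y ≤ f y + S := le_add_of_eAbsDiff_le hS hS'
    _ ≤ f x + H + S := by gcongr; exact le_add_of_eAbsDiff_le hH hH'
    _ ≤ t + (H + S : ℝ≥0∞) := by rw [EReal.coe_ennreal_add, ← add_assoc]; gcongr

end Epigraph

lemma le_of_forall_mem_Ioo_le_of_continuousAt {α β : Type*} [TopologicalSpace α] [LinearOrder α]
    [OrderTopology α] [DenselyOrdered α] [TopologicalSpace β] [Preorder β] [ClosedIciTopology β]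
    {φ : α → β} {a : β} {e b : α} (hφ : ContinuousAt φ e) (heb : e < b)
    (h : ∀ d ∈ Ioo e b, a ≤ φ d) : a ≤ φ e :=
  haveI := nhdsGT_neBot_of_exists_gt ⟨b, heb⟩
  ge_of_tendsto (hφ.tendsto.mono_left nhdsWithin_le_nhds) (eventually_of_mem (Ioo_mem_nhdsGT heb) h)

lemma eAbsDiff_le_mul_edist_rpow_of_closedBall {X : Type*} [PseudoMetricSpace X] {c : X}
    {f : X → EReal} {κ α R : ℝ} (hκ : 0 ≤ κ) (hα : 0 ≤ α) (hR : 0 ≤ R)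
    (h : ∀ x ∈ closedBall c R, ∀ x' ∈ closedBall c R,
      eAbsDiff (f x) (f x') ≤ ENNReal.ofReal (κ * dist x x' ^ α)) :
    ∀ x ∈ closedEBall c (ENNReal.ofReal R), ∀ x' ∈ closedEBall c (ENNReal.ofReal R),
      eAbsDiff (f x) (f x') ≤ ENNReal.ofReal κ * edist x x' ^ α := by
  rw [closedEBall_ofReal hR]
  intro x hx x' hx'
  rw [edist_dist, ofReal_rpow_of_nonneg dist_nonneg hα, ← ofReal_mul hκ]
  exact h x hx x' hx'

lemma exs_epi_inter_closedEBall_le {X : Type*} [PseudoMetricSpace X] {c : X} {f g : X → EReal}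
    {K R S : ℝ≥0∞} {α ρ : ℝ} {A C : Set X} (hK : K ≠ ⊤) (hα : 0 ≤ α) (hρ : 0 ≤ ρ)
    (hfH : ∀ x ∈ closedEBall c R, ∀ x' ∈ closedEBall c R,
      eAbsDiff (f x) (f x') ≤ K * edist x x' ^ α)
    (hS : ∀ y ∈ C, eAbsDiff (f y) (g y) ≤ S)
    (hA : {x | f x ≤ ρ} ∩ closedBall c ρ ⊆ A) (hR : ENNReal.ofReal ρ + exs A C < R) :
    exs (epi f ∩ closedEBall (c, 0) (ENNReal.ofReal ρ)) (epi g)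
      ≤ max (exs A C) (K * exs A C ^ α + S) := by
  refine iSup₂_le fun ⟨x, t⟩ ⟨hxt, hball⟩ ↦ ?_
  replace hxt : f x ≤ t := hxt
  rw [← closedEBall_prod_same] at hball
  obtain ⟨hxρ, htρ⟩ := hball
  rw [closedEBall_ofReal hρ, Real.closedBall_eq_Icc] at htρ
  have hxA : x ∈ A := by
    refine hA ⟨?_, closedEBall_ofReal (x := c) hρ ▸ hxρ⟩
    exact hxt.trans (by exact_mod_cast (by linarith [htρ.2] : t ≤ ρ))
  have hxC : infEDist x C ≤ exs A C := le_iSup₂ (f := fun x _ ↦ infEDist x C) x hxA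
  have hφ : Continuous fun d : ℝ≥0∞ ↦ max d (K * d ^ α + S) :=
    continuous_id.max (((ENNReal.continuous_const_mul hK).comp continuous_rpow_const).add
      continuous_const)
  refine le_of_forall_mem_Ioo_le_of_continuousAt (φ := fun d ↦ max d (K * d ^ α + S))
    hφ.continuousAt (lt_tsub_iff_left.mpr hR)
    fun d ⟨hed, hdR⟩ ↦ ?_
  obtain ⟨y, hyC, hxy⟩ := infEDist_lt_iff.mp (hxC.trans_lt hed)
  have hxR : x ∈ closedEBall c R :=
    mem_closedEBall.mpr ((mem_closedEBall.mp hxρ).trans (le_self_add.trans hR.le))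
  have hyR : y ∈ closedEBall c R := by
    refine mem_closedEBall.mpr ?_
    calc edist y c ≤ edist y x + edist x c := edist_triangle y x c
      _ ≤ d + ENNReal.ofReal ρ := by rw [edist_comm]; gcongr; exact mem_closedEBall.mp hxρ
      _ ≤ R := (lt_tsub_iff_right.mp hdR).le
  calc infEDist (x, t) (epi g) ≤ max (edist x y) (K * edist x y ^ α + S) :=
        infEDist_epi_le_of_eAbsDiff_le hxt (hfH x hxR y hyR) (hS y hyC)
    _ ≤ max d (K * d ^ α + S) := by gcongr

theorem stmt13_general {X : Type*} [MetricSpace X] (c : X) (f g : X → EReal)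
    (κ : ℝ → ℝ) (hκ : ∀ r, 0 ≤ κ r) (α : ℝ) (hα : 0 < α)
    (hfH : ∀ r : ℝ, 0 ≤ r → ∀ x ∈ Metric.closedBall c r, ∀ x' ∈ Metric.closedBall c r,
        eAbsDiff (f x) (f x') ≤ ENNReal.ofReal (κ r * dist x x' ^ α))
    (hgH : ∀ r : ℝ, 0 ≤ r → ∀ x ∈ Metric.closedBall c r, ∀ x' ∈ Metric.closedBall c r,
        eAbsDiff (g x) (g x') ≤ ENNReal.ofReal (κ r * dist x x' ^ α))
    (C : Set X) (ρ ρh : ℝ) (hρ : 0 ≤ ρ)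
    (A : Set X)
    (hA : A = ({x | f x ≤ ((ρ : ℝ) : EReal)} ∪ {x | g x ≤ ((ρ : ℝ) : EReal)})
        ∩ Metric.closedBall c ρ)
    (hρh : ENNReal.ofReal ρh > ENNReal.ofReal ρ + exs A C) :
    dl (c, (0 : ℝ)) (ENNReal.ofReal ρ) (epi f) (epi g)
      ≤ max (exs A C)
          (ENNReal.ofReal (κ ρh) * (exs A C) ^ α + ⨆ x ∈ C, eAbsDiff (f x) (g x)) := by
  have hρh₀ : 0 ≤ ρh := (ENNReal.ofReal_pos.mp (pos_of_gt hρh)).le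
  have hS : ∀ y ∈ C, eAbsDiff (f y) (g y) ≤ ⨆ x ∈ C, eAbsDiff (f x) (g x) :=
    fun y hy ↦ le_iSup₂ (f := fun x _ ↦ eAbsDiff (f x) (g x)) y hy
  subst hA
  exact max_le
    (exs_epi_inter_closedEBall_le ofReal_ne_top hα.le hρ
      (eAbsDiff_le_mul_edist_rpow_of_closedBall (hκ ρh) hα.le hρh₀ (hfH ρh hρh₀)) hS
      (inter_subset_inter_left _ subset_union_left) hρh)
    (exs_epi_inter_closedEBall_le ofReal_ne_top hα.le hρ
      (eAbsDiff_le_mul_edist_rpow_of_closedBall (hκ ρh) hα.le hρh₀ (hgH ρh hρh₀))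
      (fun y hy ↦ eAbsDiff_comm (f y) (g y) ▸ hS y hy)
      (inter_subset_inter_left _ subset_union_right) hρh)

/-- estimate from the sup-norm over a subset `C`, for α-Hölder
continuous functions. -/
theorem stmt13 {X : Type*} [MetricSpace X] (c : X) (f g : X → EReal)
    (hf : (epi f).Nonempty) (hg : (epi g).Nonempty)
    (κ : ℝ → ℝ) (hκ : ∀ r, 0 ≤ κ r) (α : ℝ) (hα : 0 < α)
    (hfH : ∀ r : ℝ, 0 ≤ r → ∀ x ∈ Metric.closedBall c r, ∀ x' ∈ Metric.closedBall c r,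
        eAbsDiff (f x) (f x') ≤ ENNReal.ofReal (κ r * dist x x' ^ α))
    (hgH : ∀ r : ℝ, 0 ≤ r → ∀ x ∈ Metric.closedBall c r, ∀ x' ∈ Metric.closedBall c r,
        eAbsDiff (g x) (g x') ≤ ENNReal.ofReal (κ r * dist x x' ^ α))
    (C : Set X) (hC : C.Nonempty) (ρ ρh : ℝ) (hρ : 0 ≤ ρ)
    (A : Set X)
    (hA : A = ({x | f x ≤ ((ρ : ℝ) : EReal)} ∪ {x | g x ≤ ((ρ : ℝ) : EReal)})
        ∩ Metric.closedBall c ρ)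
    (hρh : ENNReal.ofReal ρh > ENNReal.ofReal ρ + exs A C) :
    dl (c, (0 : ℝ)) (ENNReal.ofReal ρ) (epi f) (epi g)
      ≤ max (exs A C)
          (ENNReal.ofReal (κ ρh) * (exs A C) ^ α + ⨆ x ∈ C, eAbsDiff (f x) (g x)) :=
  stmt13_general c f g κ hκ α hα hfH hgH C ρ ρh hρ A hA hρh
end
end

section
/- Let X, Y be metric spaces, S, T : X ⇉ Y set-valued mappings with nonempty graphs, 0 ≤ ε ≤ ρ < ∞, and y* ∈ B_Y(ρ−ε). If δ > ε + dl_ρ(gph S, gph T), then exs(S⁻¹(B_Y(y*,ε)) ∩ B_X(ρ); T⁻¹(B_Y(y*,δ))) ≤ dl_ρ(gph S, gph T), where dl_ρ is computed on X×Y with the product metric and product centroid. Moreover, if X and Y are finitely compact (all closed balls compact) and gph T is closed, the bound also holds for δ = ε + dl_ρ(gph S, gph T). -/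
open Set Filter Metric ENNReal Pointwise Classical

noncomputable section

/-!
A point `x` of `S⁻¹(B_Y(y*, ε)) ∩ B_X(ρ)` comes with `y ∈ S x`, `d(y, y*) ≤ ε`; since
`y* ∈ B_Y(ρ - ε)`, the pair `(x, y)` lies in `gph S ∩ B(ρ)`, so it is within `dl_ρ(gph S, gph T)`
of `gph T`. A nearby point `(x', y') ∈ gph T` has `d(y', y*) ≤ ε + d((x, y), (x', y'))`, so `x'`
solves the perturbed inclusion and is close to `x`. Strict inequality `δ > ε + dl_ρ` absorbs the
slack of an almost-nearest point; in proper spaces a closed graph has nearest points and no slack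
is needed.
-/

section Excess

variable {α : Type*} [PseudoEMetricSpace α]

lemma infEDist_le_exs_s16 {A B : Set α} {a : α} (ha : a ∈ A) : infEDist a B ≤ exs A B :=
  le_iSup₂ (f := fun a (_ : a ∈ A) => infEDist a B) a ha

lemma exs_le_of_forall_infEDist_le {A B : Set α} {r : ℝ≥0∞}
    (h : ∀ a ∈ A, infEDist a B ≤ r) : exs A B ≤ r :=
  iSup₂_le h

lemma infEDist_le_dl_s16 {A B : Set α} {c a : α} {ρ : ℝ≥0∞}
    (ha : a ∈ A) (haρ : a ∈ closedEBall c ρ) : infEDist a B ≤ dl c ρ A B :=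
  (infEDist_le_exs_s16 (show a ∈ A ∩ closedEBall c ρ from ⟨ha, haρ⟩)).trans (le_max_left _ _)

end Excess

section ProdApprox

variable {X Y : Type*}

lemma mk_mem_closedEBall_ofReal [PseudoMetricSpace X] [PseudoMetricSpace Y]
    {x cX : X} {y cY : Y} {ρ : ℝ} (hx : dist x cX ≤ ρ) (hy : dist y cY ≤ ρ) :
    (x, y) ∈ closedEBall (cX, cY) (ENNReal.ofReal ρ) := by
  rw [mem_closedEBall, Prod.edist_eq, edist_dist, edist_dist]
  exact max_le (ENNReal.ofReal_le_ofReal hx) (ENNReal.ofReal_le_ofReal hy)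

variable [PseudoEMetricSpace X] [PseudoEMetricSpace Y]

lemma infEDist_le_of_edist_prod_le {G : Set (X × Y)} {x : X} {y y₀ : Y} {p : X × Y}
    {e r d : ℝ≥0∞} (hp : p ∈ G) (hy : edist y y₀ ≤ e) (hxy : edist (x, y) p ≤ r)
    (hd : e + r ≤ d) : infEDist x {x' | ∃ y', (x', y') ∈ G ∧ edist y' y₀ ≤ d} ≤ r := by
  rw [Prod.edist_eq, max_le_iff] at hxy
  have hp₂ : edist p.2 y₀ ≤ d :=
    calc edist p.2 y₀ ≤ edist y p.2 + edist y y₀ := edist_triangle_left _ _ _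
      _ ≤ e + r := add_comm r e ▸ add_le_add hxy.2 hy
      _ ≤ d := hd
  refine (infEDist_le_edist_of_mem ?_).trans hxy.1
  exact ⟨p.2, hp, hp₂⟩

lemma infEDist_le_of_infEDist_prod_le {G : Set (X × Y)} {x : X} {y y₀ : Y} {e r d : ℝ≥0∞}
    (hy : edist y y₀ ≤ e) (hxy : infEDist (x, y) G ≤ r) (hd : e + r < d) :
    infEDist x {x' | ∃ y', (x', y') ∈ G ∧ edist y' y₀ ≤ d} ≤ r := by
  refine le_of_forall_gt_imp_ge_of_dense fun η hη => ?_
  set η' := min η (d - e)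
  obtain ⟨p, hp, hxp⟩ := infEDist_lt_iff.1 (hxy.trans_lt (lt_min hη (lt_tsub_iff_left.2 hd)))
  have hη'd : e + η' ≤ d :=
    calc e + η' ≤ e + (d - e) := add_le_add_right (min_le_right _ _) e
      _ = d := add_tsub_cancel_of_le (le_self_add.trans hd.le)
  exact (infEDist_le_of_edist_prod_le hp hy hxp.le hη'd).trans (min_le_left _ _)

end ProdApprox

lemma infEDist_le_of_infEDist_prod_le_of_isClosed {X Y : Type*} [PseudoMetricSpace X]
    [PseudoMetricSpace Y] [ProperSpace X] [ProperSpace Y] {G : Set (X × Y)} {x : X} {y y₀ : Y}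
    {e r : ℝ≥0∞} (hG : IsClosed G) (hy : edist y y₀ ≤ e) (hxy : infEDist (x, y) G ≤ r) :
    infEDist x {x' | ∃ y', (x', y') ∈ G ∧ edist y' y₀ ≤ e + r} ≤ r := by
  rcases G.eq_empty_or_nonempty with rfl | hne
  · simp_all
  obtain ⟨p, hp, hxp⟩ := hG.exists_infDist_eq_dist hne (x, y)
  refine infEDist_le_of_edist_prod_le hp hy ?_ le_rfl
  rwa [edist_dist, ← hxp, infDist, ofReal_toReal (infEDist_ne_top hne)]

theorem stmt16_general {X Y : Type*} [MetricSpace X] [MetricSpace Y] (cX : X) (cY : Y)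
    (S T : X → Set Y) (GS GT : Set (X × Y))
    (hGS : GS = {p : X × Y | p.2 ∈ S p.1}) (hGT : GT = {p : X × Y | p.2 ∈ T p.1})
    (ε ρ : ℝ) (ys : Y) (hys : dist cY ys ≤ ρ - ε) :
    (∀ δ : ℝ, ENNReal.ofReal δ >
        ENNReal.ofReal ε + dl (cX, cY) (ENNReal.ofReal ρ) GS GT →
      exs ({x | ∃ y ∈ S x, dist y ys ≤ ε} ∩ Metric.closedBall cX ρ)
          {x | ∃ y ∈ T x, dist y ys ≤ δ}
        ≤ dl (cX, cY) (ENNReal.ofReal ρ) GS GT)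
    ∧ (ProperSpace X → ProperSpace Y → IsClosed GT →
      exs ({x | ∃ y ∈ S x, dist y ys ≤ ε} ∩ Metric.closedBall cX ρ)
          {x | ∃ y ∈ T x,
            edist y ys ≤ ENNReal.ofReal ε + dl (cX, cY) (ENNReal.ofReal ρ) GS GT}
        ≤ dl (cX, cY) (ENNReal.ofReal ρ) GS GT) := by
  subst hGS hGT
  set D := dl (cX, cY) (ENNReal.ofReal ρ) {p : X × Y | p.2 ∈ S p.1} {p : X × Y | p.2 ∈ T p.1}
  have near_gph_T : ∀ x ∈ {x | ∃ y ∈ S x, dist y ys ≤ ε} ∩ Metric.closedBall cX ρ, ∃ y,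
      edist y ys ≤ ENNReal.ofReal ε ∧ infEDist (x, y) {p : X × Y | p.2 ∈ T p.1} ≤ D := by
    rintro x ⟨⟨y, hyS, hyε⟩, hxρ⟩
    have hyρ : dist y cY ≤ ρ := by linarith [dist_triangle_right y cY ys]
    exact ⟨y, edist_dist y ys ▸ ofReal_le_ofReal hyε,
      infEDist_le_dl_s16 hyS (mk_mem_closedEBall_ofReal hxρ hyρ)⟩
  refine ⟨fun δ hδ => ?_, fun _ _ hT => ?_⟩ <;>
    refine exs_le_of_forall_infEDist_le fun x hx => ?_ <;>
    obtain ⟨y, hy, hxy⟩ := near_gph_T x hx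
  · have hδ0 : 0 ≤ δ := (ENNReal.ofReal_pos.1 (pos_of_gt hδ)).le
    simpa only [mem_ofPred_eq, edist_le_ofReal hδ0] using infEDist_le_of_infEDist_prod_le hy hxy hδ
  · exact infEDist_le_of_infEDist_prod_le_of_isClosed hT hy hxy

/-- approximation of near-solutions of generalized equations. -/
theorem stmt16 {X Y : Type*} [MetricSpace X] [MetricSpace Y] (cX : X) (cY : Y)
    (S T : X → Set Y) (GS GT : Set (X × Y))
    (hGS : GS = {p : X × Y | p.2 ∈ S p.1}) (hGT : GT = {p : X × Y | p.2 ∈ T p.1})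
    (hGSne : GS.Nonempty) (hGTne : GT.Nonempty)
    (ε ρ : ℝ) (hε : 0 ≤ ε) (hερ : ε ≤ ρ) (ys : Y) (hys : dist cY ys ≤ ρ - ε) :
    (∀ δ : ℝ, ENNReal.ofReal δ >
        ENNReal.ofReal ε + dl (cX, cY) (ENNReal.ofReal ρ) GS GT →
      exs ({x | ∃ y ∈ S x, dist y ys ≤ ε} ∩ Metric.closedBall cX ρ)
          {x | ∃ y ∈ T x, dist y ys ≤ δ}
        ≤ dl (cX, cY) (ENNReal.ofReal ρ) GS GT)
    ∧ (ProperSpace X → ProperSpace Y → IsClosed GT →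
      exs ({x | ∃ y ∈ S x, dist y ys ≤ ε} ∩ Metric.closedBall cX ρ)
          {x | ∃ y ∈ T x,
            edist y ys ≤ ENNReal.ofReal ε + dl (cX, cY) (ENNReal.ofReal ρ) GS GT}
        ≤ dl (cX, cY) (ENNReal.ofReal ρ) GS GT) :=
  stmt16_general cX cY S T GS GT hGS hGT ε ρ ys hys
end
end

section
/- Let X, Y be metric spaces with centroids, f : Y → ℝ Lipschitz continuous with modulus κ : ℝ₊ → ℝ₊ (on centered balls), and F, G : X → Y. For ρ ≥ 0, if ρ̄ exceeds max{ρ, sup_{x∈B_X(ρ), f(F(x))≤ρ} d_Y(y_ctr, F(x)), sup_{x∈B_X(ρ), f(G(x))≤ρ} d_Y(y_ctr, G(x))} and ρ̂ > ρ̄ + dl_{ρ̄}(gph F, gph G), then dl_ρ(epi(f∘F), epi(f∘G)) ≤ max{1, κ(ρ̂)} · dl_{ρ̄}(gph F, gph G). -/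
/-! A point `(x, α)` of the truncated epigraph of `f ∘ F` lies over a point `(x, F x)` of the
truncated graph of `F`, by the choice of `ρb`. A point `(x', G x')` of the graph of `G` close to it
stays in the ball of radius `ρh`, where `f` is `κ(ρh)`-Lipschitz, so
`(x', α + κ(ρh) d(F x, G x'))` lies in the epigraph of `f ∘ G` at distance at most
`max 1 κ(ρh) · d((x, F x), (x', G x'))` from `(x, α)`. -/

open Set Filter Metric ENNReal Pointwise Classical

noncomputable section

open Topology

theorem Metric.infEDist_le_mul_infEDist_of_forall_lt {α β : Type*} [PseudoEMetricSpace α]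
    [PseudoEMetricSpace β] {a : α} {S : Set α} {b : β} {T : Set β} {M R : ℝ≥0∞} (hM : M ≠ ∞)
    (hR : infEDist a S < R)
    (h : ∀ q ∈ S, edist a q < R → infEDist b T ≤ M * edist a q) :
    infEDist b T ≤ M * infEDist a S := by
  have : (𝓝[>] infEDist a S).NeBot := nhdsGT_neBot_of_exists_gt ⟨R, hR⟩
  have hlim : Tendsto (M * ·) (𝓝[>] infEDist a S) (𝓝 (M * infEDist a S)) :=
    (ENNReal.continuousAt_const_mul (Or.inl hM)).tendsto.mono_left nhdsWithin_le_nhds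
  refine ge_of_tendsto hlim ?_
  filter_upwards [Ioo_mem_nhdsGT hR] with d ⟨hSd, hdR⟩
  obtain ⟨q, hq, hqd⟩ := infEDist_lt_iff.1 hSd
  exact (h q hq (hqd.trans hdR)).trans (mul_le_mul_right hqd.le M)

section Epigraph

variable {X Y : Type*} [PseudoMetricSpace X] [PseudoMetricSpace Y] {f : Y → ℝ} {c : Y} {r K : ℝ}

theorem infEDist_epi_comp_le (hK : 0 ≤ K)
    (hf : ∀ y ∈ closedBall c r, ∀ y' ∈ closedBall c r, |f y - f y'| ≤ K * dist y y')
    {g : X → Y} {x x' : X} {y : Y} {α : ℝ} (hy : y ∈ closedBall c r)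
    (hx' : g x' ∈ closedBall c r) (hα : f y ≤ α) :
    infEDist (x, α) (epi fun x => ((f (g x) : ℝ) : EReal))
      ≤ ENNReal.ofReal (max 1 K) * edist (x, y) (x', g x') := by
  have hmem : (x', α + K * dist y (g x')) ∈ epi fun x => ((f (g x) : ℝ) : EReal) := by
    have hlip := (abs_le.1 (hf _ hx' _ hy)).2
    rw [dist_comm] at hlip
    simp only [epi, mem_ofPred_eq, EReal.coe_le_coe_iff]
    linarith
  refine (infEDist_le_edist_of_mem hmem).trans ?_
  rw [edist_dist, edist_dist, ← ENNReal.ofReal_mul (by positivity)]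
  refine ENNReal.ofReal_le_ofReal ?_
  rw [Prod.dist_eq, Prod.dist_eq, Real.dist_eq, sub_add_cancel_left, abs_neg,
    abs_of_nonneg (by positivity)]
  refine max_le ?_ (mul_le_mul (le_max_right _ _) (le_max_right _ _) dist_nonneg (by positivity))
  calc dist x x' = 1 * dist x x' := (one_mul _).symm
    _ ≤ max 1 K * max (dist x x') (dist y (g x')) := by gcongr <;> simp

theorem exs_epi_comp_le {cX : X} {F G : X → Y} {ρ ρb : ℝ} (hρ : 0 ≤ ρ) (hK : 0 ≤ K)
    (hf : ∀ y ∈ closedBall c r, ∀ y' ∈ closedBall c r, |f y - f y'| ≤ K * dist y y')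
    (hρb : ρ < ρb)
    (hFρb : ⨆ x ∈ {x | x ∈ closedBall cX ρ ∧ f (F x) ≤ ρ}, edist c (F x) < ENNReal.ofReal ρb)
    {D : ℝ≥0∞} (hD : exs ({p : X × Y | p.2 = F p.1} ∩
      closedEBall (cX, c) (ENNReal.ofReal ρb)) {p | p.2 = G p.1} ≤ D)
    (hr : ENNReal.ofReal ρb + D < ENNReal.ofReal r) :
    exs (epi (fun x => ((f (F x) : ℝ) : EReal)) ∩
        closedEBall (cX, (0 : ℝ)) (ENNReal.ofReal ρ)) (epi fun x => ((f (G x) : ℝ) : EReal))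
      ≤ ENNReal.ofReal (max 1 K) * D := by
  have hρb0 : 0 ≤ ρb := hρ.trans hρb.le
  refine iSup₂_le fun ⟨x, α⟩ ⟨hα, hxα⟩ => ?_
  rw [mem_closedEBall, Prod.edist_eq, max_le_iff, edist_le_ofReal hρ, edist_le_ofReal hρ,
    Real.dist_eq, sub_zero] at hxα
  replace hα : f (F x) ≤ α := EReal.coe_le_coe_iff.1 hα
  have hFx : dist (F x) c < ρb := by
    rw [dist_comm, ← edist_lt_ofReal]
    exact (le_iSup₂ (f := fun x _ => edist c (F x)) x
      ⟨hxα.1, hα.trans ((le_abs_self α).trans hxα.2)⟩).trans_lt hFρb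
  have hgraph : (x, F x) ∈ {p : X × Y | p.2 = F p.1} ∩
      closedEBall (cX, c) (ENNReal.ofReal ρb) := by
    refine ⟨rfl, ?_⟩
    rw [mem_closedEBall, Prod.edist_eq, max_le_iff, edist_le_ofReal hρb0,
      edist_le_ofReal hρb0]
    exact ⟨hxα.1.trans hρb.le, hFx.le⟩
  have hxD : infEDist (x, F x) {p : X × Y | p.2 = G p.1} ≤ D :=
    (le_iSup₂ (f := fun q _ => infEDist q {p : X × Y | p.2 = G p.1}) _ hgraph).trans hD
  have hDr : D < ENNReal.ofReal (r - ρb) := by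
    rwa [ENNReal.ofReal_sub _ hρb0, lt_tsub_iff_left]
  refine (infEDist_le_mul_infEDist_of_forall_lt ofReal_ne_top (hxD.trans_lt hDr) ?_).trans
    (mul_le_mul_right hxD _)
  rintro ⟨x', y'⟩ (rfl : y' = G x') hq
  have hFG : dist (F x) (G x') < r - ρb := by
    have hq' := edist_lt_ofReal.1 hq
    rw [Prod.dist_eq] at hq'
    exact (le_max_right _ _).trans_lt hq'
  have hFxr : dist (F x) c ≤ r := by linarith [dist_nonneg (x := F x) (y := G x')]
  have hGx'r : dist (G x') c ≤ r := by
    linarith [dist_triangle (G x') (F x) c, dist_comm (G x') (F x)]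
  exact infEDist_epi_comp_le hK hf hFxr hGx'r hα

end Epigraph

/-- compositions with a Lipschitz continuous outer function. -/
theorem stmt17 {X Y : Type*} [MetricSpace X] [MetricSpace Y] (cX : X) (cY : Y)
    (f : Y → ℝ) (κ : ℝ → ℝ) (hκ : ∀ r, 0 ≤ κ r)
    (hfL : ∀ r : ℝ, 0 ≤ r → ∀ y ∈ Metric.closedBall cY r, ∀ y' ∈ Metric.closedBall cY r,
        |f y - f y'| ≤ κ r * dist y y')
    (F G : X → Y) (ρ ρb ρh : ℝ) (hρ : 0 ≤ ρ)
    (hρb : ENNReal.ofReal ρb > max (ENNReal.ofReal ρ)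
      (max (⨆ x ∈ {x | x ∈ Metric.closedBall cX ρ ∧ f (F x) ≤ ρ}, edist cY (F x))
           (⨆ x ∈ {x | x ∈ Metric.closedBall cX ρ ∧ f (G x) ≤ ρ}, edist cY (G x))))
    (hρh : ENNReal.ofReal ρh > ENNReal.ofReal ρb +
      dl (cX, cY) (ENNReal.ofReal ρb) {p : X × Y | p.2 = F p.1} {p | p.2 = G p.1}) :
    dl (cX, (0 : ℝ)) (ENNReal.ofReal ρ)
        (epi (fun x => ((f (F x) : ℝ) : EReal))) (epi (fun x => ((f (G x) : ℝ) : EReal)))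
      ≤ ENNReal.ofReal (max 1 (κ ρh)) *
        dl (cX, cY) (ENNReal.ofReal ρb) {p : X × Y | p.2 = F p.1} {p | p.2 = G p.1} := by
  obtain ⟨hρρb, hSF, hSG⟩ := by simpa only [gt_iff_lt, max_lt_iff] using hρb
  replace hρρb : ρ < ρb := (ENNReal.ofReal_lt_ofReal_iff_of_nonneg hρ).1 hρρb
  have hρh0 : 0 ≤ ρh := (ENNReal.ofReal_pos.1 (pos_of_gt hρh)).le
  have hfρh := hfL ρh hρh0
  exact max_le (exs_epi_comp_le hρ (hκ ρh) hfρh hρρb hSF (le_max_left _ _) hρh)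
    (exs_epi_comp_le hρ (hκ ρh) hfρh hρρb hSG (le_max_right _ _) hρh)
end
end

section
/- Let φ, ψ : ℝ^m → [−∞,∞] be proper lsc functions, F, G : ℝ^n → ℝ^m continuously differentiable, and define S, T : ℝ^n×ℝ^m×ℝ^m ⇉ ℝ^m×ℝ^m×ℝ^n by S(x,y,z) = ({F(x)−z}, ∂φ(z)−{y}, {∇F(x)ᵀy}) and T(x,y,z) = ({G(x)−z}, ∂ψ(z)−{y}, {∇G(x)ᵀy}). Then for any ρ ≥ 0, dl_ρ(gph S, gph T) ≤ sup_{‖x‖≤ρ} max{ ‖G(x)−F(x)‖ + dl_{2ρ}(gph ∂φ, gph ∂ψ), ρ·‖∇G(x)ᵀ − ∇F(x)ᵀ‖ }, where the graph distances use the product norm built from given norms on ℝ^n, ℝ^m and a matrix norm compatible with the norm on ℝ^m. -/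
open Set Filter Metric ENNReal Pointwise Classical

noncomputable section

/-- Regular (Fréchet) subgradients of `φ` at `x`. -/
def fSubgrad {E : Type*} [NormedAddCommGroup E] [InnerProductSpace ℝ E]
    (φ : E → EReal) (x : E) : Set E :=
  {v | φ x ≠ ⊤ ∧ φ x ≠ ⊥ ∧ ∀ ε : ℝ, 0 < ε → ∃ δ > 0, ∀ y, ‖y - x‖ ≤ δ →
    φ x + (((inner ℝ v (y - x) : ℝ) - ε * ‖y - x‖ : ℝ) : EReal) ≤ φ y}

/-- General (limiting/Mordukhovich) subgradients of `φ` at `x`. -/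
def limSubgrad {E : Type*} [NormedAddCommGroup E] [InnerProductSpace ℝ E]
    (φ : E → EReal) (x : E) : Set E :=
  {v | ∃ xs vs : ℕ → E, (∀ n, vs n ∈ fSubgrad φ (xs n)) ∧
    Tendsto xs atTop (nhds x) ∧ Tendsto (fun n => φ (xs n)) atTop (nhds (φ x)) ∧
    Tendsto vs atTop (nhds v)}

/-!
A point `((x, y, z), (F x - z, v, ∇F(x)ᵀ y))` of `gph S` in the `ρ`-ball yields the point
`(z, v + y)` of `gph ∂φ` in the `2ρ`-ball. Replacing it by a nearby `(z', s) ∈ gph ∂ψ` gives the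
point `((x, y, z'), (G x - z', s - y, ∇G(x)ᵀ y))` of `gph T`, which differs from the original one
by at most `‖G x - F x‖ + ‖(z, v + y) - (z', s)‖` in the first three output components and by
`‖(∇G(x)ᵀ - ∇F(x)ᵀ) y‖ ≤ ρ ‖∇G(x)ᵀ - ∇F(x)ᵀ‖` in the last one.
-/

theorem Metric.infEDist_le_max_add_infEDist {α β : Type*} [PseudoEMetricSpace α]
    [PseudoEMetricSpace β] {a : α} {s : Set α} {b : β} {t : Set β} {c d : ℝ≥0∞}
    (h : ∀ b' ∈ t, ∃ a' ∈ s, edist a a' ≤ max (c + edist b b') d) :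
    infEDist a s ≤ max (c + infEDist b t) d := by
  simp only [infEDist, ENNReal.add_iInf, iInf₂_sup_eq]
  refine le_iInf₂ fun b' hb' => ?_
  obtain ⟨a', ha', hle⟩ := h b' hb'
  exact (infEDist_le_edist_of_mem ha').trans hle

section CompositeGraph

variable {𝕜 X Y Z : Type*} [NontriviallyNormedField 𝕜] [SeminormedAddCommGroup X]
  [SeminormedAddCommGroup Y] [NormedSpace 𝕜 Y] [SeminormedAddCommGroup Z] [NormedSpace 𝕜 Z]

/-- The graph of `(x, y, z) ↦ ({F x - z}, S z - {y}, {A x y})`, where the set-valued map `S` is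
given by its graph. -/
def compositeGraph (F : X → Y) (S : Set (Y × Y)) (A : X → Y →L[𝕜] Z) :
    Set ((X × Y × Y) × (Y × Y × Z)) :=
  {q | q.2.1 = F q.1.1 - q.1.2.2 ∧ (q.1.2.2, q.2.2.1 + q.1.2.1) ∈ S ∧ q.2.2.2 = A q.1.1 q.1.2.1}

variable {F G : X → Y} {S T : Set (Y × Y)} {A B : X → Y →L[𝕜] Z}

theorem exists_mem_compositeGraph_edist_le {x : X} {y z u v : Y} {w : Z}
    (hq : ((x, y, z), (u, v, w)) ∈ compositeGraph F S A) {p : Y × Y} (hp : p ∈ T) :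
    ∃ q ∈ compositeGraph G T B, edist ((x, y, z), (u, v, w)) q ≤
      max (edist (F x) (G x) + edist (z, v + y) p) (edist (A x y) (B x y)) := by
  simp only [compositeGraph, Set.mem_ofPred_eq] at hq
  obtain ⟨rfl, -, rfl⟩ := hq
  obtain ⟨z', s⟩ := p
  refine ⟨((x, y, z'), (G x - z', s - y, B x y)), ⟨rfl, by simpa using hp, rfl⟩, ?_⟩
  have hz : edist z z' ≤ edist (z, v + y) (z', s) := by rw [Prod.edist_eq]; exact le_max_left ..
  have hv : edist v (s - y) ≤ edist (z, v + y) (z', s) := by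
    rw [← edist_add_right v (s - y) y, sub_add_cancel, Prod.edist_eq]; exact le_max_right ..
  have hu : edist (F x - z) (G x - z') ≤ edist (F x) (G x) + edist (z, v + y) (z', s) :=
    calc edist (F x - z) (G x - z')
        ≤ edist (F x - z) (G x - z) + edist (G x - z) (G x - z') := edist_triangle ..
      _ = edist (F x) (G x) + edist z z' := by rw [edist_sub_right, edist_sub_left]
      _ ≤ _ := by gcongr
  simp only [Prod.edist_eq, edist_self, max_le_iff]
  exact ⟨⟨zero_le, zero_le, le_max_of_le_left (hz.trans le_add_self)⟩,
    le_max_of_le_left hu, le_max_of_le_left (hv.trans le_add_self), le_max_right ..⟩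

theorem infEDist_compositeGraph_le {x : X} {y z u v : Y} {w : Z}
    (hq : ((x, y, z), (u, v, w)) ∈ compositeGraph F S A) :
    infEDist ((x, y, z), (u, v, w)) (compositeGraph G T B) ≤
      max (edist (F x) (G x) + infEDist (z, v + y) T) (edist (A x y) (B x y)) :=
  infEDist_le_max_add_infEDist fun _ hp => exists_mem_compositeGraph_edist_le hq hp

theorem exs_compositeGraph_le (r : ℝ≥0∞) :
    exs (compositeGraph F S A ∩ closedEBall 0 r) (compositeGraph G T B) ≤
      ⨆ x ∈ closedEBall (0 : X) r,
        max (edist (F x) (G x) + exs (S ∩ closedEBall 0 (2 * r)) T)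
          (r * edist (A x) (B x)) := by
  refine iSup₂_le ?_
  rintro ⟨⟨x, y, z⟩, u, v, w⟩ ⟨hq, hr⟩
  simp only [mem_closedEBall, Prod.edist_eq, Prod.fst_zero, Prod.snd_zero, max_le_iff] at hr
  obtain ⟨⟨hx, hy, hz⟩, -, hv, -⟩ := hr
  have hp : (z, v + y) ∈ S ∩ closedEBall 0 (2 * r) := by
    refine ⟨hq.2.1, ?_⟩
    show max (edist z 0) (edist (v + y) 0) ≤ 2 * r
    have hvy : edist (v + y) 0 ≤ edist v 0 + edist y 0 := by
      simpa using edist_add_add_le v y 0 0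
    rw [two_mul]
    exact max_le (hz.trans le_self_add) (hvy.trans (add_le_add hv hy))
  have hA : edist (A x y) (B x y) ≤ r * edist (A x) (B x) :=
    calc edist (A x y) (B x y) = ‖(A x - B x) y‖ₑ := by
          rw [edist_eq_enorm_sub, sub_apply]
      _ ≤ ‖A x - B x‖ₑ * ‖y‖ₑ := (A x - B x).le_opENorm y
      _ ≤ r * edist (A x) (B x) := by
          rw [mul_comm, edist_eq_enorm_sub, ← edist_zero_right]; gcongr
  refine (infEDist_compositeGraph_le hq).trans
    (le_iSup₂_of_le x (mem_closedEBall.2 hx) ?_)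
  gcongr
  exact le_iSup₂ (f := fun p _ => infEDist p T) _ hp

theorem dl_compositeGraph_le (r : ℝ≥0∞) :
    dl 0 r (compositeGraph F S A) (compositeGraph G T B) ≤
      ⨆ x ∈ closedEBall (0 : X) r,
        max (edist (F x) (G x) + dl 0 (2 * r) S T) (r * edist (A x) (B x)) := by
  refine max_le ?_ ?_
  · refine exs_compositeGraph_le r |>.trans <| iSup₂_mono fun x _ => ?_
    gcongr
    exact le_max_left ..
  · refine exs_compositeGraph_le r |>.trans <| iSup₂_mono fun x _ => ?_
    rw [edist_comm (G x), edist_comm (B x)]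
    gcongr
    exact le_max_right ..

end CompositeGraph

theorem stmt18_general {n m : ℕ}
    (φ ψ : EuclideanSpace ℝ (Fin m) → EReal)
    (F G : EuclideanSpace ℝ (Fin n) → EuclideanSpace ℝ (Fin m))
    (ρ : ℝ) (hρ : 0 ≤ ρ) :
    dl (0 : (EuclideanSpace ℝ (Fin n) × EuclideanSpace ℝ (Fin m) × EuclideanSpace ℝ (Fin m))
          × (EuclideanSpace ℝ (Fin m) × EuclideanSpace ℝ (Fin m) × EuclideanSpace ℝ (Fin n)))
        (ENNReal.ofReal ρ)
        {q | q.2.1 = F q.1.1 - q.1.2.2 ∧ q.2.2.1 + q.1.2.1 ∈ limSubgrad φ q.1.2.2 ∧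
             q.2.2.2 = (ContinuousLinearMap.adjoint (fderiv ℝ F q.1.1)) q.1.2.1}
        {q | q.2.1 = G q.1.1 - q.1.2.2 ∧ q.2.2.1 + q.1.2.1 ∈ limSubgrad ψ q.1.2.2 ∧
             q.2.2.2 = (ContinuousLinearMap.adjoint (fderiv ℝ G q.1.1)) q.1.2.1}
      ≤ ⨆ x ∈ Metric.closedBall (0 : EuclideanSpace ℝ (Fin n)) ρ,
          max (ENNReal.ofReal ‖G x - F x‖ +
              dl (0 : EuclideanSpace ℝ (Fin m) × EuclideanSpace ℝ (Fin m))
                (ENNReal.ofReal (2 * ρ))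
                {p | p.2 ∈ limSubgrad φ p.1} {p | p.2 ∈ limSubgrad ψ p.1})
            (ENNReal.ofReal (ρ * ‖ContinuousLinearMap.adjoint (fderiv ℝ G x)
                - ContinuousLinearMap.adjoint (fderiv ℝ F x)‖)) := by
  have h := dl_compositeGraph_le (S := {p | p.2 ∈ limSubgrad φ p.1})
    (T := {p | p.2 ∈ limSubgrad ψ p.1}) (F := F) (G := G)
    (A := fun x => ContinuousLinearMap.adjoint (fderiv ℝ F x))
    (B := fun x => ContinuousLinearMap.adjoint (fderiv ℝ G x)) (ENNReal.ofReal ρ)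
  have h2ρ : 2 * ENNReal.ofReal ρ = ENNReal.ofReal (2 * ρ) := by
    rw [ENNReal.ofReal_mul zero_le_two, ENNReal.ofReal_ofNat]
  rw [closedEBall_ofReal hρ, h2ρ] at h
  refine h.trans_eq (iSup_congr fun x => iSup_congr fun _ => ?_)
  rw [edist_comm, edist_dist, dist_eq_norm, edist_comm, edist_dist, dist_eq_norm,
    ENNReal.ofReal_mul hρ]

/-- stationarity of composite functions. -/
theorem stmt18 {n m : ℕ}
    (φ ψ : EuclideanSpace ℝ (Fin m) → EReal)
    (hφbot : ∀ z, φ z ≠ ⊥) (hφtop : ∃ z, φ z ≠ ⊤) (hφlsc : LowerSemicontinuous φ)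
    (hψbot : ∀ z, ψ z ≠ ⊥) (hψtop : ∃ z, ψ z ≠ ⊤) (hψlsc : LowerSemicontinuous ψ)
    (F G : EuclideanSpace ℝ (Fin n) → EuclideanSpace ℝ (Fin m))
    (hF : ContDiff ℝ 1 F) (hG : ContDiff ℝ 1 G) (ρ : ℝ) (hρ : 0 ≤ ρ) :
    dl (0 : (EuclideanSpace ℝ (Fin n) × EuclideanSpace ℝ (Fin m) × EuclideanSpace ℝ (Fin m))
          × (EuclideanSpace ℝ (Fin m) × EuclideanSpace ℝ (Fin m) × EuclideanSpace ℝ (Fin n)))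
        (ENNReal.ofReal ρ)
        {q | q.2.1 = F q.1.1 - q.1.2.2 ∧ q.2.2.1 + q.1.2.1 ∈ limSubgrad φ q.1.2.2 ∧
             q.2.2.2 = (ContinuousLinearMap.adjoint (fderiv ℝ F q.1.1)) q.1.2.1}
        {q | q.2.1 = G q.1.1 - q.1.2.2 ∧ q.2.2.1 + q.1.2.1 ∈ limSubgrad ψ q.1.2.2 ∧
             q.2.2.2 = (ContinuousLinearMap.adjoint (fderiv ℝ G q.1.1)) q.1.2.1}
      ≤ ⨆ x ∈ Metric.closedBall (0 : EuclideanSpace ℝ (Fin n)) ρ,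
          max (ENNReal.ofReal ‖G x - F x‖ +
              dl (0 : EuclideanSpace ℝ (Fin m) × EuclideanSpace ℝ (Fin m))
                (ENNReal.ofReal (2 * ρ))
                {p | p.2 ∈ limSubgrad φ p.1} {p | p.2 ∈ limSubgrad ψ p.1})
            (ENNReal.ofReal (ρ * ‖ContinuousLinearMap.adjoint (fderiv ℝ G x)
                - ContinuousLinearMap.adjoint (fderiv ℝ F x)‖)) :=
  stmt18_general φ ψ F G ρ hρ
end
end
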